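/- arXiv:1002.1236 — 4 statements merged into one kernel-verified Lean document; each statement's English description precedes it below -/
import Mathlib

section
/- Let M be a finite monoid, H a subgroup of its unit group, and D a double coset HxH in M. For z, z' ∈ D and subsets D_i, D_j that are double cosets, #{(x,y) ∈ D_i × D_j : xy = z} = #{(x,y) ∈ D_i × D_j : xy = z'}. -/
/-- For double cosets `D_i`, `D_j`, `D` of a subgroup `H` of the unit group of a
finite monoid `M`, the number of pairs `(x,y) ∈ D_i × D_j` with `x·y = z` is the same for all
`z ∈ D`. -/
theorem double_coset_pair_count_independent
    (M : Type*) [Monoid M] [Fintype M] [DecidableEq M]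
    (H : Subgroup Mˣ)
    (Di Dj D : Finset M)
    (hi : ∃ x : M, ∀ y, y ∈ Di ↔ ∃ h₁ h₂ : H, y = ((h₁ : Mˣ) : M) * x * ((h₂ : Mˣ) : M))
    (hj : ∃ x : M, ∀ y, y ∈ Dj ↔ ∃ h₁ h₂ : H, y = ((h₁ : Mˣ) : M) * x * ((h₂ : Mˣ) : M))
    (hD : ∃ x : M, ∀ y, y ∈ D ↔ ∃ h₁ h₂ : H, y = ((h₁ : Mˣ) : M) * x * ((h₂ : Mˣ) : M))
    (z z' : M) (hz : z ∈ D) (hz' : z' ∈ D) :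
    (Finset.univ.filter (fun p : M × M => p.1 ∈ Di ∧ p.2 ∈ Dj ∧ p.1 * p.2 = z)).card =
    (Finset.univ.filter (fun p : M × M => p.1 ∈ Di ∧ p.2 ∈ Dj ∧ p.1 * p.2 = z')).card := by
  obtain ⟨xi, hi⟩ := hi
  obtain ⟨xj, hj⟩ := hj
  obtain ⟨x₀, hD⟩ := hD
  obtain ⟨a, b, hab⟩ := (hD z).1 hz
  obtain ⟨c, d, hcd⟩ := (hD z').1 hz'
  set u : H := c * a⁻¹ with hu
  set v : H := b⁻¹ * d with hv
  have key : ((u : Mˣ) : M) * z * ((v : Mˣ) : M) = z' := by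
    have : ((u : Mˣ) : M) * z * ((v : Mˣ) : M)
        = ((c : Mˣ) : M) * ((((a⁻¹ : H) : Mˣ) : M) * ((a : Mˣ) : M)) * x₀ *
          ((((b : Mˣ) : M) * (((b⁻¹ : H) : Mˣ) : M)) * ((d : Mˣ) : M)) := by
      rw [hab, hu, hv]
      push_cast
      simp [mul_assoc]
    rw [this, hcd]
    norm_cast
    rw [inv_mul_cancel, mul_inv_cancel]
    simp
  have closDi : ∀ y ∈ Di, ∀ h : H, ((h : Mˣ) : M) * y ∈ Di := by
    intro y hy h
    obtain ⟨h₁, h₂, rfl⟩ := (hi y).1 hy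
    exact (hi _).2 ⟨h * h₁, h₂, by push_cast; simp [mul_assoc]⟩
  have closDj : ∀ y ∈ Dj, ∀ h : H, y * ((h : Mˣ) : M) ∈ Dj := by
    intro y hy h
    obtain ⟨h₁, h₂, rfl⟩ := (hj y).1 hy
    exact (hj _).2 ⟨h₁, h₂ * h, by push_cast; simp [mul_assoc]⟩
  apply Finset.card_bij (fun p _ => (((u : Mˣ) : M) * p.1, p.2 * ((v : Mˣ) : M)))
  · intro p hp
    simp only [Finset.mem_filter, Finset.mem_univ, true_and] at hp ⊢
    obtain ⟨h1, h2, h3⟩ := hp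
    refine ⟨closDi _ h1 u, closDj _ h2 v, ?_⟩
    rw [show ((u : Mˣ) : M) * p.1 * (p.2 * ((v : Mˣ) : M))
        = ((u : Mˣ) : M) * (p.1 * p.2) * ((v : Mˣ) : M) by simp [mul_assoc], h3, key]
  · intro p hp q hq heq
    simp only [Prod.mk.injEq] at heq
    ext
    · exact (u : Mˣ).isUnit.mul_right_injective heq.1
    · exact (v : Mˣ).isUnit.mul_left_injective heq.2
  · intro p hp
    simp only [Finset.mem_filter, Finset.mem_univ, true_and] at hp
    obtain ⟨h1, h2, h3⟩ := hp
    refine ⟨((((u⁻¹ : H) : Mˣ) : M) * p.1, p.2 * (((v⁻¹ : H) : Mˣ) : M)), ?_, ?_⟩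
    · simp only [Finset.mem_filter, Finset.mem_univ, true_and]
      refine ⟨closDi _ h1 u⁻¹, closDj _ h2 v⁻¹, ?_⟩
      have e1 : (((u⁻¹ : H) : Mˣ) : M) * p.1 * (p.2 * (((v⁻¹ : H) : Mˣ) : M))
          = (((u⁻¹ : H) : Mˣ) : M) * z' * (((v⁻¹ : H) : Mˣ) : M) := by
        rw [← h3]; simp [mul_assoc]
      rw [e1, ← key]
      have e2 : (((u⁻¹ : H) : Mˣ) : M) * (((u : Mˣ) : M) * z * ((v : Mˣ) : M)) * (((v⁻¹ : H) : Mˣ) : M)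
          = (((((u⁻¹ : H) : Mˣ) * (u : Mˣ)) : Mˣ) : M) * z * ((((v : Mˣ) * ((v⁻¹ : H) : Mˣ)) : Mˣ) : M) := by
        push_cast; simp [mul_assoc]
      rw [e2]
      norm_cast
      rw [inv_mul_cancel, mul_inv_cancel]
      simp
    · apply Prod.ext <;> simp only
      · rw [← mul_assoc]; norm_cast; rw [mul_inv_cancel]; simp
      · rw [mul_assoc]; norm_cast; rw [inv_mul_cancel]; simp
end

section
/- Let (R,Λ,S) be a generalised Renner–Coxeter system with unit group W. For every r ∈ R there exists a unique triple (w₁, e, w₂) with e ∈ Λ, w₁ a minimal-length element in its coset w₁·W_{λ_⋆(e)}, and w₂ a minimal-length element in its coset W_{λ(e)}·w₂, such that r = w₁·e·w₂. -/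
noncomputable section

/-- A generalised Renner–Coxeter system on a monoid `R`: a Coxeter system `(Rˣ, S)` on the unit
group (indexed by `B`, with data `cm`, `cs`), a cross-section semilattice `Λ` of idempotents,
and type maps `lam = λ`, `lamStar = λ_⋆` satisfying axioms (ECS1)–(ECS6). -/
structure GRCSystem (B : Type*) (R : Type*) [Monoid R] where
  /-- The Coxeter matrix indexing the simple reflections `S`. -/
  cm : CoxeterMatrix B
  /-- (ECS3): the unit group of `R` is a Coxeter group. -/
  cs : CoxeterSystem cm Rˣ
  /-- The cross-section lattice `Λ`. -/
  Λ : Set R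
  /-- The type map `λ`, with `W(e) = W_{λ(e)}`. -/
  lam : R → Set B
  /-- The map `λ_⋆`, with `W_⋆(e) = W_{λ_⋆(e)}`. -/
  lamStar : R → Set B
  /-- (ECS1): idempotents commute, i.e. `E(R)` is a (lower) semilattice. -/
  idem_mul_comm : ∀ e f : R, IsIdempotentElem e → IsIdempotentElem f → e * f = f * e
  /-- (ECS1): `R` is unit regular (factorisable). -/
  factor : ∀ r : R, ∃ (e : R) (g : Rˣ), IsIdempotentElem e ∧ r = e * (g : R)
  /-- (ECS2): elements of `Λ` are idempotent. -/
  lam_idem : ∀ e ∈ Λ, IsIdempotentElem e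
  /-- (ECS2): `Λ` is a sub-semilattice of `E(R)`. -/
  lam_mul_mem : ∀ e ∈ Λ, ∀ f ∈ Λ, e * f ∈ Λ
  /-- (ECS2): `Λ` is a transversal of `E(R)` for the conjugation action of the unit group. -/
  transversal : ∀ e : R, IsIdempotentElem e →
    ∃! f : R, f ∈ Λ ∧ ∃ w : Rˣ, (w : R) * f * ((w⁻¹ : Rˣ) : R) = e
  /-- (ECS4): comparable idempotents are simultaneously conjugate to a comparable pair in `Λ`. -/
  ecs4 : ∀ e₁ e₂ : R, IsIdempotentElem e₁ → IsIdempotentElem e₂ →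
    e₁ * e₂ = e₁ → e₂ * e₁ = e₁ →
    ∃ (w : Rˣ) (f₁ f₂ : R), f₁ ∈ Λ ∧ f₂ ∈ Λ ∧ f₁ * f₂ = f₁ ∧ f₂ * f₁ = f₁ ∧
      (w : R) * f₁ * ((w⁻¹ : Rˣ) : R) = e₁ ∧ (w : R) * f₂ * ((w⁻¹ : Rˣ) : R) = e₂
  /-- (ECS5): `W(e)` is the standard parabolic subgroup on `λ(e)`. -/
  mem_lam_iff : ∀ e ∈ Λ, ∀ w : Rˣ,
    ((w : R) * e = e * (w : R)) ↔ w ∈ Subgroup.closure (cs.simple '' lam e)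
  /-- (ECS5): `W_⋆(e)` is the standard parabolic subgroup on `λ_⋆(e)`. -/
  mem_lamStar_iff : ∀ e ∈ Λ, ∀ w : Rˣ,
    ((w : R) * e = e ∧ e * (w : R) = e) ↔ w ∈ Subgroup.closure (cs.simple '' lamStar e)
  /-- (ECS6): the map `e ↦ λ^⋆(e)` is order preserving. -/
  ecs6 : ∀ e ∈ Λ, ∀ f ∈ Λ, e * f = e →
    ∀ s : B, ((cs.simple s : R) * e = e * (cs.simple s : R) ∧ (cs.simple s : R) * e ≠ e) →
      ((cs.simple s : R) * f = f * (cs.simple s : R) ∧ (cs.simple s : R) * f ≠ f)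

namespace GRCSystem

variable {B R : Type*} [Monoid R] (G : GRCSystem B R)

/-- The standard parabolic subgroup `W_I` of the unit group of `R`. -/
def parab (I : Set B) : Subgroup Rˣ := Subgroup.closure (G.cs.simple '' I)

/-- The set `λ^⋆(e) = {s ∈ S : s e = e s ≠ e}`. -/
def lamCostar (e : R) : Set B :=
  {s : B | (G.cs.simple s : R) * e = e * (G.cs.simple s : R) ∧ (G.cs.simple s : R) * e ≠ e}

/-- Value in `R` of a letter of the alphabet `S ⊔ R`. -/
def letterVal : B ⊕ R → R := Sum.elim (fun s => ((G.cs.simple s : Rˣ) : R)) id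

/-- A word on the alphabet `S ∪ (Λ ∖ {1})`: every `inr` letter is a nonidentity element of `Λ`. -/
def IsWord (l : List (B ⊕ R)) : Prop := ∀ e : R, Sum.inr e ∈ l → e ∈ G.Λ ∧ e ≠ 1

/-- The length of a word: letters from `S` count 1, letters from `Λ` count 0. -/
def wordLen (l : List (B ⊕ R)) : ℕ := (l.filter Sum.isLeft).length

/-- The length `ℓ(r)`: the minimal length of a word on `S ∪ (Λ ∖ {1})` representing `r`. -/
def len (r : R) : ℕ :=
  sInf {n : ℕ | ∃ l : List (B ⊕ R), G.IsWord l ∧ (l.map G.letterVal).prod = r ∧ n = wordLen l}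

/-- `(w₁, e, w₂)` is the normal decomposition of `r`: `e ∈ Λ`, `w₁` is `(∅, λ_⋆(e))`-reduced
(minimal length in `w₁ W_{λ_⋆(e)}`), `w₂` is `(λ(e), ∅)`-reduced (minimal length in
`W_{λ(e)} w₂`), and `r = w₁ e w₂`. -/
def IsNormalDecomp (r : R) (w₁ : Rˣ) (e : R) (w₂ : Rˣ) : Prop :=
  e ∈ G.Λ ∧
  (∀ u ∈ G.parab (G.lamStar e), G.cs.length w₁ ≤ G.cs.length (w₁ * u)) ∧
  (∀ u ∈ G.parab (G.lam e), G.cs.length w₂ ≤ G.cs.length (u * w₂)) ∧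
  r = (w₁ : R) * e * (w₂ : R)

/-- `w` is `(I,J)`-reduced: `w` has minimal length in the double coset `W_I w W_J`. -/
def IsRed (I J : Set B) (w : Rˣ) : Prop :=
  ∀ u ∈ G.parab I, ∀ v ∈ G.parab J, G.cs.length w ≤ G.cs.length (u * w * v)

end GRCSystem

/-! ### Auxiliary Coxeter-theoretic and monoid-theoretic lemmas -/

open List Finset

namespace CoxProof

variable {W : Type*} [Group W]

set_option linter.unusedSectionVars false
set_option linter.unusedTactic false

/-- Parity-tracking monoid: `(f, w)` where `f` records parities of reflection counts. -/
@[ext]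
structure NG (W : Type*) [Group W] where
  par : W → ZMod 2
  elt : W

instance : Monoid (NG W) where
  mul x y := ⟨fun t => x.par (y.elt * t * y.elt⁻¹) + y.par t, x.elt * y.elt⟩
  one := ⟨0, 1⟩
  mul_assoc a b c := by
    refine NG.ext ?_ (mul_assoc _ _ _)
    funext t
    show a.par (b.elt * (c.elt * t * c.elt⁻¹) * b.elt⁻¹) + b.par (c.elt * t * c.elt⁻¹) + c.par t =
      a.par (b.elt * c.elt * t * (b.elt * c.elt)⁻¹) + (b.par (c.elt * t * c.elt⁻¹) + c.par t)
    rw [add_assoc]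
    congr 2
    group
  one_mul a := by
    refine NG.ext ?_ (one_mul _)
    funext t
    show (0 : W → ZMod 2) (a.elt * t * a.elt⁻¹) + a.par t = a.par t
    simp
  mul_one a := by
    refine NG.ext ?_ (mul_one _)
    funext t
    show a.par ((1:W) * t * (1:W)⁻¹) + (0 : W → ZMod 2) t = a.par t
    simp

theorem NG.mul_def (x y : NG W) :
    x * y = ⟨fun t => x.par (y.elt * t * y.elt⁻¹) + y.par t, x.elt * y.elt⟩ := rfl

theorem NG.one_def : (1 : NG W) = ⟨(0 : W → ZMod 2), (1 : W)⟩ := rfl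

theorem NG.mul_par (x y : NG W) :
    (x * y).par = fun t => x.par (y.elt * t * y.elt⁻¹) + y.par t := rfl

theorem NG.mul_elt (x y : NG W) : (x * y).elt = x.elt * y.elt := rfl




open Classical in
/-- indicator of equality, valued in `ZMod 2` -/
noncomputable def ind (a b : W) : ZMod 2 := if a = b then 1 else 0

lemma ind_congr {a b c d : W} (h : (a = b) ↔ (c = d)) : ind a b = ind c d := by
  unfold ind
  by_cases hab : a = b
  · rw [if_pos hab, if_pos (h.mp hab)]
  · rw [if_neg hab, if_neg fun hc => hab (h.mpr hc)]

lemma zmod2_add_self (a : ZMod 2) : a + a = 0 := by revert a; decide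

lemma sum_shift_periodic (m : ℕ) (f : ℤ → ZMod 2) (hf : ∀ x : ℤ, f (x + m) = f x)
    (c : ℕ) : ∑ k ∈ range m, f (k + c) = ∑ k ∈ range m, f k := by
  induction c with
  | zero => simp
  | succ c ih =>
    have key : ∀ g : ℤ → ZMod 2, g m = g 0 → (∑ k ∈ range m, g (k + 1)) = ∑ k ∈ range m, g k := by
      intro g hg
      have h1 := Finset.sum_range_succ (fun k : ℕ => g k) m
      have h2 := Finset.sum_range_succ' (fun k : ℕ => g k) m
      rw [h1] at h2
      push_cast at h2 ⊢
      rw [hg] at h2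
      exact (add_right_cancel h2.symm)
    have := key (fun x : ℤ => f (x + c)) (by simpa [add_comm] using hf (c : ℤ))
    calc ∑ k ∈ range m, f (k + (c+1):ℤ)
        = ∑ k ∈ range m, f ((k + 1 : ℕ) + (c:ℤ)) := by
          apply Finset.sum_congr rfl; intro k _; congr 1; push_cast; ring
      _ = ∑ k ∈ range m, f (k + c) := this
      _ = ∑ k ∈ range m, f k := ih

lemma dihedral_parity (σ τ : W) (hσ : σ * σ = 1) (hτ : τ * τ = 1) {m : ℕ}
    (hv : (σ * τ) ^ m = 1) (t : W) :
    ∑ k ∈ range m,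
      (ind ((σ*τ)^k * t * ((σ*τ)^k)⁻¹) (τ * σ * τ) + ind ((σ*τ)^k * t * ((σ*τ)^k)⁻¹) τ) = 0 := by
  set v := σ * τ with hvdef
  have hσi : σ⁻¹ = σ := inv_eq_of_mul_eq_one_left hσ
  have hτi : τ⁻¹ = τ := inv_eq_of_mul_eq_one_left hτ
  have hvz : v ^ (m : ℤ) = 1 := by rw [zpow_natCast, hv]
  have hper : ∀ x : ℤ, v ^ (x + m) = v ^ x := by
    intro x; rw [zpow_add, hvz, mul_one]
  have hper' : ∀ x : ℤ, v ^ (-(x + m)) = v ^ (-x) := by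
    intro x
    rw [show -(x + (m:ℤ)) = -x - m by ring, zpow_sub, hvz]
    simp
  set P : ℤ → ZMod 2 := fun x => ind t (v ^ (-x) * τ * v ^ x) with hP
  set D : ℤ → ZMod 2 := fun x => ind t (v ^ (-x) * σ * v ^ x) with hD
  have hPper : ∀ x : ℤ, P (x + m) = P x := by
    intro x; simp only [hP]; rw [hper x, hper' x]
  have hDper : ∀ x : ℤ, D (x + m) = D x := by
    intro x; simp only [hD]; rw [hper x, hper' x]
  -- conjugation facts
  have hτvτ : τ * v * τ⁻¹ = v⁻¹ := by
    rw [hτi, hvdef, mul_inv_rev, hσi, hτi]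
    rw [show τ * (σ * τ) * τ = τ * σ * (τ * τ) by group, hτ, mul_one]
  have hσvσ : σ * v * σ⁻¹ = v⁻¹ := by
    rw [hσi, hvdef, mul_inv_rev, hσi, hτi]
    rw [show σ * (σ * τ) * σ = (σ * σ) * τ * σ by group, hσ, one_mul]
  have hτvx : ∀ x : ℤ, τ * v ^ x * τ = v ^ (-x) := by
    intro x
    calc τ * v ^ x * τ = (τ * v * τ⁻¹) ^ x := by rw [conj_zpow, hτi]
      _ = v ^ (-x) := by rw [hτvτ, inv_zpow, ← zpow_neg]
  have hσvx : ∀ x : ℤ, σ * v ^ x * σ = v ^ (-x) := by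
    intro x
    calc σ * v ^ x * σ = (σ * v * σ⁻¹) ^ x := by rw [conj_zpow, hσi]
      _ = v ^ (-x) := by rw [hσvσ, inv_zpow, ← zpow_neg]
  -- rewrite the summands
  have hsummand : ∀ k : ℕ,
      ind ((σ*τ)^k * t * ((σ*τ)^k)⁻¹) (τ * σ * τ) + ind ((σ*τ)^k * t * ((σ*τ)^k)⁻¹) τ
        = D ((k : ℤ) + 1) + P (k : ℤ) := by
    intro k
    have hnp : (σ*τ)^k = v ^ (k : ℤ) := by rw [← hvdef, zpow_natCast]
    have e1 : ((σ*τ)^k * t * ((σ*τ)^k)⁻¹ = τ * σ * τ) ↔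
        (t = v ^ (-((k:ℤ)+1)) * σ * v ^ ((k:ℤ)+1)) := by
      rw [hnp]
      have hτστ : τ * σ * τ = v ^ (-(1:ℤ)) * σ * v ^ (1:ℤ) := by
        rw [zpow_one, zpow_neg_one, hvdef, mul_inv_rev, hσi, hτi]
        rw [show τ * σ * σ * (σ * τ) = τ * (σ * σ) * σ * τ by group, hσ]
        group
      rw [hτστ]
      constructor
      · intro h
        have ht : t = v ^ (-(k:ℤ)) * (v ^ (-(1:ℤ)) * σ * v ^ (1:ℤ)) * v ^ (k:ℤ) := by
          rw [← h]; group
        rw [ht, neg_add, zpow_add, zpow_add]; group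
      · intro h
        rw [h, neg_add, zpow_add v (-(k:ℤ)), zpow_add]; group
    have e2 : ((σ*τ)^k * t * ((σ*τ)^k)⁻¹ = τ) ↔ (t = v ^ (-(k:ℤ)) * τ * v ^ (k:ℤ)) := by
      rw [hnp]
      constructor
      · intro h; rw [← h]; group
      · intro h; rw [h]; group
    rw [ind_congr e1, ind_congr e2]
  rw [Finset.sum_congr rfl (fun k _ => hsummand k), Finset.sum_add_distrib]
  have hshift1 : ∑ k ∈ range m, D ((k:ℤ) + 1) = ∑ k ∈ range m, D (k:ℤ) := by
    have := sum_shift_periodic m D hDper 1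
    simpa using this
  rw [hshift1]
  rcases Nat.even_or_odd m with ⟨q, hq⟩ | ⟨q, hq⟩
  · -- even case : v ^ q is central among σ, τ conjugation
    have hvq2 : v ^ ((q:ℤ) + (q:ℤ)) = 1 := by
      rw [show (q:ℤ) + q = (m:ℤ) by rw [hq]; push_cast; ring, hvz]
    have hvqq : v ^ (-(q:ℤ)) = v ^ (q:ℤ) := by
      rw [zpow_neg, inv_eq_iff_mul_eq_one, ← zpow_add, hvq2]
    have hcomm : ∀ g : W, g * g = 1 → (∀ x : ℤ, g * v ^ x * g = v ^ (-x)) →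
        g * v ^ (q:ℤ) = v ^ (q:ℤ) * g := by
      intro g hg hgv
      have h1 : g * v ^ (q:ℤ) * g = v ^ (q:ℤ) := by rw [hgv, hvqq]
      calc g * v ^ (q:ℤ) = g * v ^ (q:ℤ) * (g * g) := by rw [hg, mul_one]
        _ = (g * v ^ (q:ℤ) * g) * g := by group
        _ = v ^ (q:ℤ) * g := by rw [h1]
    have hconj : ∀ g : W, g * v ^ (q:ℤ) = v ^ (q:ℤ) * g →
        ∀ x : ℤ, v ^ (-(x + q)) * g * v ^ (x + q) = v ^ (-x) * g * v ^ x := by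
      intro g hg x
      rw [neg_add, zpow_add, zpow_add,
        show v ^ x * v ^ (q:ℤ) = v ^ (q:ℤ) * v ^ x by rw [← zpow_add, ← zpow_add, add_comm]]
      calc v^(-x) * v^(-(q:ℤ)) * g * (v^(q:ℤ) * v^x)
          = v^(-x) * v^(-(q:ℤ)) * (g * v^(q:ℤ)) * v^x := by group
        _ = v^(-x) * v^(-(q:ℤ)) * (v^(q:ℤ) * g) * v^x := by rw [hg]
        _ = v^(-x) * g * v^x := by group
    have hPq : ∀ x : ℤ, P (x + q) = P x := by
      intro x; simp only [hP]
      rw [hconj τ (hcomm τ hτ hτvx) x]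
    have hDq : ∀ x : ℤ, D (x + q) = D x := by
      intro x; simp only [hD]
      rw [hconj σ (hcomm σ hσ hσvx) x]
    have hsplit : ∀ f : ℤ → ZMod 2, (∀ x : ℤ, f (x + q) = f x) →
        ∑ k ∈ range m, f k = 0 := by
      intro f hf
      rw [hq, Finset.sum_range_add]
      have : ∀ k ∈ Finset.range q, f ((q + k : ℕ) : ℤ) = f k := by
        intro k _
        have : ((q + k : ℕ) : ℤ) = (k : ℤ) + q := by push_cast; ring
        rw [this, hf]
      rw [Finset.sum_congr rfl this, ← Finset.sum_add_distrib]
      exact Finset.sum_eq_zero fun k _ => zmod2_add_self _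
    rw [hsplit P hPq, hsplit D hDq, add_zero]
  · -- odd case : the two families coincide up to a shift
    have hsum1 : v ^ ((q:ℤ) + ((q:ℤ) + 1)) = 1 := by
      rw [show (q:ℤ) + ((q:ℤ)+1) = (m:ℤ) by rw [hq]; push_cast; ring, hvz]
    have hA : v ^ (q:ℤ) = v ^ (-((q:ℤ)+1)) := by
      rw [zpow_neg]
      exact eq_inv_of_mul_eq_one_left (by rw [← zpow_add, hsum1])
    have hB : v ^ ((q:ℤ)+1) = v ^ (-(q:ℤ)) := by
      rw [zpow_neg]
      exact eq_inv_of_mul_eq_one_left (by rw [← zpow_add, add_comm, hsum1])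
    have hstep : v ^ (q:ℤ) * σ = σ * v ^ (-(q:ℤ)) := by
      have h1 := hσvx (q:ℤ)
      calc v^(q:ℤ) * σ = (σ*σ) * v^(q:ℤ) * σ := by rw [hσ, one_mul]
        _ = σ * (σ * v^(q:ℤ) * σ) := by group
        _ = σ * v^(-(q:ℤ)) := by rw [h1]
    have hkey : v ^ (-((q:ℤ)+1)) * σ * v ^ ((q:ℤ)+1) = τ := by
      rw [← hA, hB]
      calc v^(q:ℤ) * σ * v^(-(q:ℤ)) = σ * v^(-(q:ℤ)) * v^(-(q:ℤ)) := by rw [hstep]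
        _ = σ * v ^ ((-(q:ℤ)) + (-(q:ℤ))) := by rw [zpow_add]; group
        _ = σ * v := by
            rw [show (-(q:ℤ)) + (-(q:ℤ)) = 1 - (m:ℤ) by rw [hq]; push_cast; ring,
              zpow_sub, hvz, zpow_one]
            group
        _ = τ := by rw [hvdef, show σ * (σ * τ) = (σ*σ)*τ by group, hσ, one_mul]
    have hPD : ∀ x : ℤ, P x = D (x + ((q:ℕ)+1)) := by
      intro x
      simp only [hP, hD]
      apply ind_congr
      constructor
      · intro h
        rw [h, ← hkey]
        push_cast
        rw [neg_add, zpow_add, zpow_add]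
        try group
      · intro h
        rw [h, ← hkey]
        push_cast
        rw [neg_add, zpow_add, zpow_add]
        try group
    have : ∑ k ∈ range m, P (k:ℤ) = ∑ k ∈ range m, D (k:ℤ) := by
      calc ∑ k ∈ range m, P (k:ℤ) = ∑ k ∈ range m, D ((k:ℤ) + ((q:ℕ)+1)) :=
            Finset.sum_congr rfl fun k _ => hPD k
        _ = ∑ k ∈ range m, D (k:ℤ) := by
            have := sum_shift_periodic m D hDper (q+1)
            rw [← this]
            apply Finset.sum_congr rfl
            intro k _
            have hc : ((k:ℤ) + ((q:ℕ)+1)) = ((k:ℤ) + ((q+1:ℕ):ℤ)) := by push_cast; ring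
            rw [hc]
    rw [this, ← Finset.sum_add_distrib]
    exact Finset.sum_eq_zero fun k _ => zmod2_add_self _



variable {B : Type*} {M : CoxeterMatrix B} (cs : CoxeterSystem M W)

/-- sum of equality-indicators over a list: counts occurrences mod 2 -/
noncomputable def parityCount (l : List W) (t : W) : ZMod 2 := (l.map fun x => ind t x).sum

lemma parityCount_nil (t : W) : parityCount ([] : List W) t = 0 := rfl

lemma parityCount_cons (a : W) (l : List W) (t : W) :
    parityCount (a :: l) t = ind t a + parityCount l t := by
  unfold parityCount
  simp

lemma parityCount_concat (a : W) (l : List W) (t : W) :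
    parityCount (l.concat a) t = parityCount l t + ind t a := by
  unfold parityCount
  simp

lemma parityCount_eq_zero_of_not_mem {l : List W} {t : W} (h : t ∉ l) :
    parityCount l t = 0 := by
  induction l with
  | nil => rfl
  | cons a l ih =>
    rw [parityCount_cons]
    have ht : t ≠ a := fun hc => h (hc ▸ (List.mem_cons_self : a ∈ a :: l))
    have : ind t a = 0 := by unfold ind; rw [if_neg ht]
    rw [this, zero_add]
    exact ih fun hc => h (List.mem_cons_of_mem a hc)

lemma mem_of_parityCount_ne_zero {l : List W} {t : W} (h : parityCount l t ≠ 0) :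
    t ∈ l := by
  by_contra hc
  exact h (parityCount_eq_zero_of_not_mem hc)

lemma ind_self (t : W) : ind t t = 1 := by unfold ind; rw [if_pos rfl]

lemma conj_eq_iff (u x c : W) : (u * x * u⁻¹ = c) ↔ (x = u⁻¹ * c * u) := by
  constructor
  · intro h; rw [← h]; group
  · intro h; rw [h]; group

lemma parityCount_map_conj (u : W) (l : List W) (t : W) :
    parityCount (l.map (MulAut.conj u)) t = parityCount l (u⁻¹ * t * u) := by
  induction l with
  | nil => rfl
  | cons a l ih =>
    rw [List.map_cons, parityCount_cons, parityCount_cons, ih]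
    congr 1
    apply ind_congr
    rw [MulAut.conj_apply]
    constructor
    · intro h; rw [h]; group
    · intro h
      calc t = u * (u⁻¹ * t * u) * u⁻¹ := by group
        _ = u * a * u⁻¹ := by rw [← h]

/-- the defining map into the parity monoid -/
noncomputable def eta (i : B) : NG W := ⟨fun t => ind t (cs.simple i), cs.simple i⟩

lemma NG.pow_def (g : W → ZMod 2) (v : W) (m : ℕ) :
    ((⟨g, v⟩ : NG W)) ^ m
      = ⟨fun t => ∑ k ∈ Finset.range m, g ((v^k) * t * (v^k)⁻¹), v ^ m⟩ := by
  induction m with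
  | zero =>
    rw [pow_zero, pow_zero]
    refine NG.ext ?_ rfl
    funext t
    show (0 : W → ZMod 2) t = ∑ k ∈ Finset.range 0, g ((v^k) * t * (v^k)⁻¹)
    simp
  | succ n ih =>
    rw [pow_succ, ih, NG.mul_def]
    refine NG.ext ?_ (pow_succ v n).symm
    funext t
    show (∑ k ∈ Finset.range n, g (v^k * (v * t * v⁻¹) * (v^k)⁻¹)) + g t
        = ∑ k ∈ Finset.range (n+1), g (v^k * t * (v^k)⁻¹)
    rw [Finset.sum_range_succ' (fun k => g (v^k * t * (v^k)⁻¹)) n]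
    congr 1
    · apply Finset.sum_congr rfl
      intro k _
      congr 1
      rw [pow_succ]
      group
    · congr 1
      group

lemma eta_liftable : M.IsLiftable (eta cs) := by
  intro i j
  set σ := cs.simple i with hσdef
  set τ := cs.simple j with hτdef
  have hσ : σ * σ = 1 := cs.simple_mul_simple_self i
  have hτ : τ * τ = 1 := cs.simple_mul_simple_self j
  have hmul : eta cs i * eta cs j =
      ⟨fun z => ind (τ * z * τ⁻¹) σ + ind z τ, σ * τ⟩ := rfl
  rw [hmul, NG.pow_def]
  refine NG.ext ?_ ?_
  · funext t
    show (∑ k ∈ Finset.range (M i j),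
        (ind (τ * ((σ*τ)^k * t * ((σ*τ)^k)⁻¹) * τ⁻¹) σ + ind ((σ*τ)^k * t * ((σ*τ)^k)⁻¹) τ))
      = (0 : W → ZMod 2) t
    have hrw : ∀ k : ℕ, ind (τ * ((σ*τ)^k * t * ((σ*τ)^k)⁻¹) * τ⁻¹) σ
        = ind ((σ*τ)^k * t * ((σ*τ)^k)⁻¹) (τ * σ * τ) := by
      intro k
      apply ind_congr
      rw [conj_eq_iff, hτdef, cs.inv_simple]
    simp only [hrw, Pi.zero_apply]
    exact dihedral_parity σ τ hσ hτ (cs.simple_mul_simple_pow i j) t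
  · show (σ * τ) ^ (M i j) = (1 : NG W).elt
    rw [NG.one_def]
    exact cs.simple_mul_simple_pow i j


/-- the parity homomorphism -/
noncomputable def phi : W →* NG W := cs.lift ⟨eta cs, eta_liftable cs⟩

lemma phi_simple (i : B) : phi cs (cs.simple i) = eta cs i :=
  cs.lift_apply_simple (eta_liftable cs) i

lemma phi_wordProd (ω : List B) :
    phi cs (cs.wordProd ω) = ⟨fun t => parityCount (cs.rightInvSeq ω) t, cs.wordProd ω⟩ := by
  induction ω with
  | nil =>
    rw [cs.wordProd_nil, map_one]
    refine NG.ext ?_ rfl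
    funext t
    show (0 : W → ZMod 2) t = parityCount (cs.rightInvSeq []) t
    rw [cs.rightInvSeq_nil]
    rfl
  | cons i ω ih =>
    rw [cs.wordProd_cons, map_mul, phi_simple, ih]
    refine NG.ext ?_ rfl
    funext t
    show ind ((cs.wordProd ω) * t * (cs.wordProd ω)⁻¹) (cs.simple i)
          + parityCount (cs.rightInvSeq ω) t
        = parityCount (cs.rightInvSeq (i :: ω)) t
    have hseq : cs.rightInvSeq (i :: ω)
        = ((cs.wordProd ω)⁻¹ * (cs.simple i) * cs.wordProd ω) :: cs.rightInvSeq ω := rfl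
    rw [hseq, parityCount_cons]
    congr 1
    exact ind_congr (conj_eq_iff _ _ _)

/-- parity of the number of occurrences in the right inversion sequence only
depends on the group element represented by the word -/
lemma parityCount_ris_eq {ω ω' : List B} (h : cs.wordProd ω = cs.wordProd ω') (t : W) :
    parityCount (cs.rightInvSeq ω) t = parityCount (cs.rightInvSeq ω') t := by
  have h1 := phi_wordProd cs ω
  have h2 := phi_wordProd cs ω'
  rw [h] at h1
  rw [h1] at h2
  exact congrFun (congrArg NG.par h2) t

lemma parityCount_reverse (l : List W) (t : W) : parityCount l.reverse t = parityCount l t := by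
  unfold parityCount
  rw [List.map_reverse, List.sum_reverse]

lemma parityCount_lis_eq {ω ω' : List B} (h : cs.wordProd ω = cs.wordProd ω') (t : W) :
    parityCount (cs.leftInvSeq ω) t = parityCount (cs.leftInvSeq ω') t := by
  have hrev : cs.wordProd ω.reverse = cs.wordProd ω'.reverse := by
    rw [cs.wordProd_reverse, cs.wordProd_reverse, h]
  have := parityCount_ris_eq cs hrev t
  rwa [cs.rightInvSeq_reverse, cs.rightInvSeq_reverse, parityCount_reverse,
    parityCount_reverse] at this



/-- right exchange property, for an arbitrary word -/
lemma right_exchange {ω : List B} {i : B}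
    (h : cs.length (cs.wordProd ω * cs.simple i) < cs.length (cs.wordProd ω)) :
    ∃ j < ω.length, cs.wordProd ω * cs.simple i = cs.wordProd (ω.eraseIdx j) := by
  obtain ⟨α, hαred, hα⟩ := cs.exists_reduced_word' (cs.wordProd ω * cs.simple i)
  have hprod : cs.wordProd (α.concat i) = cs.wordProd ω := by
    rw [cs.wordProd_concat, ← hα, mul_assoc, cs.simple_mul_simple_self, mul_one]
  have hnotmem : cs.simple i ∉ cs.rightInvSeq α := by
    intro hmem
    have hinv := (cs.isRightInversion_of_mem_rightInvSeq hαred hmem).2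
    rw [← hα, mul_assoc, cs.simple_mul_simple_self, mul_one] at hinv
    omega
  have hpc : parityCount (cs.rightInvSeq (α.concat i)) (cs.simple i) = 1 := by
    rw [cs.rightInvSeq_concat, parityCount_concat, ind_self, parityCount_map_conj]
    have harg : (cs.simple i)⁻¹ * cs.simple i * cs.simple i = cs.simple i := by group
    rw [harg, parityCount_eq_zero_of_not_mem hnotmem, zero_add]
  have hmem : cs.simple i ∈ cs.rightInvSeq ω := by
    apply mem_of_parityCount_ne_zero
    rw [← parityCount_ris_eq cs hprod, hpc]
    exact one_ne_zero
  obtain ⟨j, hj, hget⟩ := List.getElem_of_mem hmem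
  have hj' : j < ω.length := by simpa using hj
  refine ⟨j, hj', ?_⟩
  have hgetD : (cs.rightInvSeq ω).getD j 1 = cs.simple i := by
    rw [List.getD_eq_getElem _ _ hj, hget]
  rw [← hgetD]
  exact cs.wordProd_mul_getD_rightInvSeq ω j

/-- left exchange property, for an arbitrary word -/
lemma left_exchange {ω : List B} {i : B}
    (h : cs.length (cs.simple i * cs.wordProd ω) < cs.length (cs.wordProd ω)) :
    ∃ j < ω.length, cs.simple i * cs.wordProd ω = cs.wordProd (ω.eraseIdx j) := by
  obtain ⟨α, hαred, hα⟩ := cs.exists_reduced_word' (cs.simple i * cs.wordProd ω)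
  have hprod : cs.wordProd (i :: α) = cs.wordProd ω := by
    rw [cs.wordProd_cons, ← hα, ← mul_assoc, cs.simple_mul_simple_self, one_mul]
  have hnotmem : cs.simple i ∉ cs.leftInvSeq α := by
    intro hmem
    have hinv := (cs.isLeftInversion_of_mem_leftInvSeq hαred hmem).2
    rw [← hα, ← mul_assoc, cs.simple_mul_simple_self, one_mul] at hinv
    omega
  have hpc : parityCount (cs.leftInvSeq (i :: α)) (cs.simple i) = 1 := by
    have hseq : cs.leftInvSeq (i :: α)
        = cs.simple i :: List.map (MulAut.conj (cs.simple i)) (cs.leftInvSeq α) := rfl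
    rw [hseq, parityCount_cons, ind_self, parityCount_map_conj]
    have harg : (cs.simple i)⁻¹ * cs.simple i * cs.simple i = cs.simple i := by group
    rw [harg, parityCount_eq_zero_of_not_mem hnotmem, add_zero]
  have hmem : cs.simple i ∈ cs.leftInvSeq ω := by
    apply mem_of_parityCount_ne_zero
    rw [← parityCount_lis_eq cs hprod, hpc]
    exact one_ne_zero
  obtain ⟨j, hj, hget⟩ := List.getElem_of_mem hmem
  have hj' : j < ω.length := by simpa using hj
  refine ⟨j, hj', ?_⟩
  have hgetD : (cs.leftInvSeq ω).getD j 1 = cs.simple i := by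
    rw [List.getD_eq_getElem _ _ hj, hget]
  rw [← hgetD]
  exact cs.getD_leftInvSeq_mul_wordProd ω j

/-- the deletion property -/
lemma deletion {ω : List B} (h : ¬ cs.IsReduced ω) :
    ∃ ω' : List B, cs.wordProd ω' = cs.wordProd ω ∧ ω'.length + 2 = ω.length ∧
      ∀ b ∈ ω', b ∈ ω := by
  classical
  have hP : ∃ k, ¬ cs.IsReduced (ω.take k) := ⟨ω.length, by rwa [List.take_length]⟩
  set k0 := Nat.find hP with hk0
  have hk0spec : ¬ cs.IsReduced (ω.take k0) := Nat.find_spec hP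
  have hk0pos : 0 < k0 := by
    rcases Nat.eq_zero_or_pos k0 with h0 | h
    · exfalso
      apply hk0spec
      rw [h0]
      simp [CoxeterSystem.IsReduced]
    · exact h
  set k := k0 - 1 with hkdef
  have hkred : cs.IsReduced (ω.take k) := by
    have := Nat.find_min hP (show k < k0 by omega)
    simpa using this
  have hk0len : k0 ≤ ω.length := Nat.find_min' hP (by rwa [List.take_length])
  have hklt : k < ω.length := by omega
  set c := ω[k] with hcdef
  have htake : ω.take (k+1) = ω.take k ++ [c] := by
    rw [List.take_succ]
    congr
    rw [List.getElem?_eq_getElem hklt]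
    rfl
  have hkk : k + 1 = k0 := by omega
  have hnotred : ¬ cs.IsReduced (ω.take (k+1)) := by rw [hkk]; exact hk0spec
  have hlen_take : (ω.take k).length = k := by
    rw [List.length_take]; omega
  have h1 : cs.wordProd (ω.take (k+1)) = cs.wordProd (ω.take k) * cs.simple c := by
    rw [htake, cs.wordProd_append, cs.wordProd_singleton]
  have hlt : cs.length (cs.wordProd (ω.take k) * cs.simple c)
      < cs.length (cs.wordProd (ω.take k)) := by
    have h2 : cs.length (cs.wordProd (ω.take k)) = k := by
      have := hkred
      unfold CoxeterSystem.IsReduced at this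
      rw [this, hlen_take]
    have h3 : cs.length (cs.wordProd (ω.take (k+1))) ≠ (ω.take (k+1)).length := hnotred
    have h4 : (ω.take (k+1)).length = k+1 := by rw [List.length_take]; omega
    have h5 := cs.length_mul_simple (cs.wordProd (ω.take k)) c
    rw [h4] at h3
    rw [h1] at h3
    rcases h5 with h5 | h5
    · exfalso
      apply h3
      rw [h5, h2]
    · omega
  obtain ⟨j, hjlt, hdel⟩ := right_exchange cs hlt
  refine ⟨(ω.take k).eraseIdx j ++ ω.drop (k+1), ?_, ?_, ?_⟩
  · calc cs.wordProd ((ω.take k).eraseIdx j ++ ω.drop (k+1))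
        = cs.wordProd ((ω.take k).eraseIdx j) * cs.wordProd (ω.drop (k+1)) :=
          cs.wordProd_append _ _
      _ = (cs.wordProd (ω.take k) * cs.simple c) * cs.wordProd (ω.drop (k+1)) := by
          rw [← hdel]
      _ = cs.wordProd (ω.take (k+1)) * cs.wordProd (ω.drop (k+1)) := by rw [h1]
      _ = cs.wordProd ω := by rw [← cs.wordProd_append, List.take_append_drop]
  · rw [List.length_append]
    have hjlt' : j < (ω.take k).length := hjlt
    have e1 : ((ω.take k).eraseIdx j).length + 1 = (ω.take k).length :=
      List.length_eraseIdx_add_one hjlt'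
    have e2 : (ω.drop (k+1)).length = ω.length - (k+1) := List.length_drop
    omega
  · intro b hb
    rcases List.mem_append.mp hb with hb1 | hb2
    · exact (List.take_sublist k ω).subset (((ω.take k).eraseIdx_sublist j).subset hb1)
    · exact (List.drop_sublist (k+1) ω).subset hb2



section Parabolic

variable (I : Set B)

lemma closure_words {u : W} (hu : u ∈ Subgroup.closure (cs.simple '' I)) :
    ∃ l : List B, (∀ b ∈ l, b ∈ I) ∧ cs.wordProd l = u := by
  refine Subgroup.closure_induction ?_ ?_ ?_ ?_ hu
  · rintro x ⟨i, hi, rfl⟩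
    exact ⟨[i], by simpa using hi, cs.wordProd_singleton i⟩
  · exact ⟨[], by simp, cs.wordProd_nil⟩
  · rintro x y hx hy ⟨l₁, hl₁, hw₁⟩ ⟨l₂, hl₂, hw₂⟩
    refine ⟨l₁ ++ l₂, fun b hb => (List.mem_append.mp hb).elim (hl₁ b) (hl₂ b), ?_⟩
    rw [cs.wordProd_append, hw₁, hw₂]
  · rintro x hx ⟨l, hl, hw⟩
    refine ⟨l.reverse, fun b hb => hl b (List.mem_reverse.mp hb), ?_⟩
    rw [cs.wordProd_reverse, hw]

lemma closure_reduced_word {u : W} (hu : u ∈ Subgroup.closure (cs.simple '' I)) :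
    ∃ l : List B, (∀ b ∈ l, b ∈ I) ∧ cs.wordProd l = u ∧ cs.IsReduced l := by
  classical
  obtain ⟨l0, hl0, hw0⟩ := closure_words cs I hu
  have hP : ∃ n, ∃ l : List B, ((∀ b ∈ l, b ∈ I) ∧ cs.wordProd l = u) ∧ l.length = n :=
    ⟨l0.length, l0, ⟨hl0, hw0⟩, rfl⟩
  obtain ⟨l, ⟨hlI, hlw⟩, hlen⟩ := Nat.find_spec hP
  refine ⟨l, hlI, hlw, ?_⟩
  by_contra hred
  obtain ⟨l', hw', hlen', hsub⟩ := deletion cs hred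
  have hlt : l'.length < Nat.find hP := by omega
  exact Nat.find_min hP hlt ⟨l', ⟨fun b hb => hlI b (hsub b hb), hw'.trans hlw⟩, rfl⟩

lemma exists_left_descent_of_mem_closure {u : W}
    (hu : u ∈ Subgroup.closure (cs.simple '' I)) (hne : u ≠ 1) :
    ∃ i ∈ I, cs.length (cs.simple i * u) < cs.length u := by
  obtain ⟨l, hlI, hlw, hlred⟩ := closure_reduced_word cs I hu
  cases l with
  | nil => exact absurd (hlw.symm.trans cs.wordProd_nil) hne
  | cons i l' =>
    refine ⟨i, hlI i (List.mem_cons_self : i ∈ i :: l'), ?_⟩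
    have hred : cs.simple i * u = cs.wordProd l' := by
      rw [← hlw, cs.wordProd_cons, ← mul_assoc, cs.simple_mul_simple_self, one_mul]
    have h1 : cs.length (cs.wordProd l') ≤ l'.length := cs.length_wordProd_le l'
    have h2 : cs.length u = l'.length + 1 := by
      rw [← hlw]
      exact hlred
    rw [hred, h2]
    omega

lemma length_mul_of_minimal {x : W}
    (hx : ∀ u ∈ Subgroup.closure (cs.simple '' I), cs.length x ≤ cs.length (u * x)) :
    ∀ u ∈ Subgroup.closure (cs.simple '' I),
      cs.length (u * x) = cs.length u + cs.length x := by
  have main : ∀ n : ℕ, ∀ u ∈ Subgroup.closure (cs.simple '' I), cs.length u = n →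
      cs.length (u * x) = cs.length u + cs.length x := by
    intro n
    induction n using Nat.strong_induction_on with
    | _ n ih =>
      intro u hu hn
      rcases eq_or_ne u 1 with rfl | hne
      · simp
      · obtain ⟨i, hiI, hdes⟩ := exists_left_descent_of_mem_closure cs I hu hne
        set u' := cs.simple i * u with hu'def
        have hu' : u' ∈ Subgroup.closure (cs.simple '' I) :=
          mul_mem (Subgroup.subset_closure ⟨i, hiI, rfl⟩) hu
        have hlu' : cs.length u' + 1 = cs.length u := by
          rcases cs.length_simple_mul u i with hc | hc
          · rw [← hu'def] at hc
            omega
          · rw [← hu'def] at hc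
            exact hc
        have ihu' := ih (cs.length u') (by omega) u' hu' rfl
        have huu' : u = cs.simple i * u' := by
          rw [hu'def, ← mul_assoc, cs.simple_mul_simple_self, one_mul]
        have hgood : cs.length (cs.simple i * (u' * x)) = cs.length (u' * x) + 1 := by
          rcases cs.length_simple_mul (u' * x) i with hc | hc
          · exact hc
          · -- bad case: exchange gives a contradiction
            exfalso
            obtain ⟨ρ, hρI, hρw, hρred⟩ := closure_reduced_word cs I hu'
            obtain ⟨β, hβred, hβ⟩ := cs.exists_reduced_word' x
            have hρlen : ρ.length = cs.length u' := by rw [← hρw]; exact hρred.symm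
            have hβlen : β.length = cs.length x := by rw [hβ]; exact hβred.symm
            have hcat : cs.wordProd (ρ ++ β) = u' * x := by
              rw [cs.wordProd_append, hρw, ← hβ]
            have hlt : cs.length (cs.simple i * cs.wordProd (ρ ++ β))
                < cs.length (cs.wordProd (ρ ++ β)) := by
              rw [hcat]
              omega
            obtain ⟨j, hjlt, hdel⟩ := left_exchange cs hlt
            rw [hcat] at hdel
            by_cases hj : j < ρ.length
            · rw [List.eraseIdx_append_of_lt_length hj] at hdel
              have hcancel : cs.simple i * u' = cs.wordProd (ρ.eraseIdx j) := by
                have : cs.simple i * u' * x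
                    = cs.wordProd (ρ.eraseIdx j) * x := by
                  rw [mul_assoc, hdel, cs.wordProd_append, hβ]
                exact mul_right_cancel this
              have hlen1 : cs.length (cs.simple i * u') ≤ (ρ.eraseIdx j).length := by
                rw [hcancel]
                exact cs.length_wordProd_le _
              have hlen2 : (ρ.eraseIdx j).length + 1 = ρ.length :=
                List.length_eraseIdx_add_one hj
              rw [← huu'] at hlen1
              omega
            · push_neg at hj
              rw [List.eraseIdx_append_of_length_le hj] at hdel
              set x' := cs.wordProd (β.eraseIdx (j - ρ.length)) with hx'def
              have hx'eq : x' = (u'⁻¹ * cs.simple i * u') * x := by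
                have h0 : cs.wordProd (ρ ++ β.eraseIdx (j - ρ.length)) = u' * x' := by
                  rw [cs.wordProd_append, hρw, hx'def]
                have h1 : cs.simple i * (u' * x) = u' * x' := by rw [hdel, h0]
                calc x' = u'⁻¹ * (u' * x') := by group
                  _ = u'⁻¹ * (cs.simple i * (u' * x)) := by rw [h1]
                  _ = (u'⁻¹ * cs.simple i * u') * x := by group
              have hmemc : u'⁻¹ * cs.simple i * u' ∈ Subgroup.closure (cs.simple '' I) :=
                mul_mem (mul_mem (inv_mem hu') (Subgroup.subset_closure ⟨i, hiI, rfl⟩)) hu'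
              have hge := hx _ hmemc
              rw [← hx'eq] at hge
              have hjlt2 : j - ρ.length < β.length := by
                rw [List.length_append] at hjlt
                omega
              have hle : cs.length x' ≤ (β.eraseIdx (j - ρ.length)).length :=
                cs.length_wordProd_le _
              have hlen3 : (β.eraseIdx (j - ρ.length)).length + 1 = β.length :=
                List.length_eraseIdx_add_one hjlt2
              omega
        rw [huu', mul_assoc, hgood, ihu', ← huu']
        omega
  intro u hu
  exact main (cs.length u) u hu rfl

lemma min_coset_unique_left {x y c : W} (hc : c ∈ Subgroup.closure (cs.simple '' I))
    (hxy : y = c * x)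
    (hx : ∀ u ∈ Subgroup.closure (cs.simple '' I), cs.length x ≤ cs.length (u * x))
    (hy : ∀ u ∈ Subgroup.closure (cs.simple '' I), cs.length y ≤ cs.length (u * y)) :
    x = y := by
  have h1 : cs.length y = cs.length c + cs.length x := by
    rw [hxy]
    exact length_mul_of_minimal cs I hx c hc
  have h2 : cs.length y ≤ cs.length x := by
    have h3 := hy c⁻¹ (inv_mem hc)
    have h4 : c⁻¹ * y = x := by rw [hxy]; group
    rwa [h4] at h3
  have hc0 : cs.length c = 0 := by omega
  have hc1 : c = 1 := cs.length_eq_zero_iff.mp hc0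
  rw [hxy, hc1, one_mul]

lemma min_coset_unique_right {x y c : W} (hc : c ∈ Subgroup.closure (cs.simple '' I))
    (hxy : y = x * c)
    (hx : ∀ u ∈ Subgroup.closure (cs.simple '' I), cs.length x ≤ cs.length (x * u))
    (hy : ∀ u ∈ Subgroup.closure (cs.simple '' I), cs.length y ≤ cs.length (y * u)) :
    x = y := by
  have hinv : x⁻¹ = y⁻¹ := by
    refine min_coset_unique_left cs I (inv_mem hc) (by rw [hxy]; group) ?_ ?_
    · intro u hu
      have h3 := hx u⁻¹ (inv_mem hu)
      have h0 : cs.length x⁻¹ = cs.length x := cs.length_inv x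
      have h2 : cs.length (u * x⁻¹) = cs.length (x * u⁻¹) := by
        rw [← cs.length_inv (u * x⁻¹)]
        congr 1
        group
      omega
    · intro u hu
      have h3 := hy u⁻¹ (inv_mem hu)
      have h0 : cs.length y⁻¹ = cs.length y := cs.length_inv y
      have h2 : cs.length (u * y⁻¹) = cs.length (y * u⁻¹) := by
        rw [← cs.length_inv (u * y⁻¹)]
        congr 1
        group
      omega
  exact inv_injective hinv

lemma exists_min_left (x : W) : ∃ c ∈ Subgroup.closure (cs.simple '' I),
    ∀ u ∈ Subgroup.closure (cs.simple '' I),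
      cs.length (c * x) ≤ cs.length (u * (c * x)) := by
  classical
  have hP : ∃ n, ∃ c, c ∈ Subgroup.closure (cs.simple '' I) ∧ cs.length (c * x) = n :=
    ⟨cs.length x, 1, one_mem _, by rw [one_mul]⟩
  obtain ⟨c, hc, hcl⟩ := Nat.find_spec hP
  refine ⟨c, hc, fun u hu => ?_⟩
  rw [hcl, ← mul_assoc]
  exact Nat.find_min' hP ⟨u * c, mul_mem hu hc, rfl⟩

lemma exists_min_right (x : W) : ∃ c ∈ Subgroup.closure (cs.simple '' I),
    ∀ u ∈ Subgroup.closure (cs.simple '' I),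
      cs.length (x * c) ≤ cs.length ((x * c) * u) := by
  classical
  have hP : ∃ n, ∃ c, c ∈ Subgroup.closure (cs.simple '' I) ∧ cs.length (x * c) = n :=
    ⟨cs.length x, 1, one_mem _, by rw [mul_one]⟩
  obtain ⟨c, hc, hcl⟩ := Nat.find_spec hP
  refine ⟨c, hc, fun u hu => ?_⟩
  rw [hcl, mul_assoc]
  exact Nat.find_min' hP ⟨c * u, mul_mem hc hu, rfl⟩

end Parabolic



section Monoid

variable {R : Type*} [Monoid R]

lemma idem_conj {e : R} (he : IsIdempotentElem e) (w : Rˣ) :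
    IsIdempotentElem ((w : R) * e * ((w⁻¹ : Rˣ) : R)) := by
  unfold IsIdempotentElem at *
  calc ((w:R) * e * ((w⁻¹:Rˣ):R)) * ((w:R) * e * ((w⁻¹:Rˣ):R))
      = (w:R) * (e * (((w⁻¹:Rˣ):R) * (w:R)) * e) * ((w⁻¹:Rˣ):R) := by
        simp only [mul_assoc]
    _ = (w:R) * (e * e) * ((w⁻¹:Rˣ):R) := by rw [Units.inv_mul, mul_one]
    _ = (w:R) * e * ((w⁻¹:Rˣ):R) := by rw [he]

lemma idem_eq_of_mul_unit (comm : ∀ e f : R, IsIdempotentElem e → IsIdempotentElem f → e * f = f * e)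
    {e f : R} (he : IsIdempotentElem e) (hf : IsIdempotentElem f)
    {g h : Rˣ} (heq : e * (g : R) = f * (h : R)) : e = f := by
  have h1 : e = f * (h : R) * ((g⁻¹ : Rˣ) : R) := by
    rw [← heq, mul_assoc, Units.mul_inv, mul_one]
  have h2 : f = e * (g : R) * ((h⁻¹ : Rˣ) : R) := by
    rw [heq, mul_assoc, Units.mul_inv, mul_one]
  have hfe : f * e = e := by
    calc f * e = f * (f * ((h:R) * ((g⁻¹:Rˣ):R))) := by rw [h1]; simp only [mul_assoc]
      _ = (f * f) * ((h:R) * ((g⁻¹:Rˣ):R)) := by rw [mul_assoc]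
      _ = f * ((h:R) * ((g⁻¹:Rˣ):R)) := by rw [hf]
      _ = e := by rw [← mul_assoc, ← h1]
  have hef : e * f = f := by
    calc e * f = e * (e * ((g:R) * ((h⁻¹:Rˣ):R))) := by rw [h2]; simp only [mul_assoc]
      _ = (e * e) * ((g:R) * ((h⁻¹:Rˣ):R)) := by rw [mul_assoc]
      _ = e * ((g:R) * ((h⁻¹:Rˣ):R)) := by rw [he]
      _ = f := by rw [← mul_assoc, ← h2]
  calc e = f * e := hfe.symm
    _ = e * f := (comm e f he hf).symm
    _ = f := hef

lemma unit_right_stab (comm : ∀ e f : R, IsIdempotentElem e → IsIdempotentElem f → e * f = f * e)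
    {e : R} (he : IsIdempotentElem e) {u : Rˣ}
    (hu : e * (u : R) = e) : (u : R) * e = e := by
  have hgi : e * ((u⁻¹:Rˣ):R) = e := by
    have h := congrArg (fun z => z * ((u⁻¹:Rˣ):R)) hu
    rw [mul_assoc, Units.mul_inv, mul_one] at h
    exact h.symm
  set f := ((u⁻¹:Rˣ):R) * e with hfdef
  have hff : IsIdempotentElem f := by
    unfold IsIdempotentElem
    calc ((u⁻¹:Rˣ):R) * e * (((u⁻¹:Rˣ):R) * e)
        = ((u⁻¹:Rˣ):R) * ((e * ((u⁻¹:Rˣ):R)) * e) := by simp only [mul_assoc]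
      _ = ((u⁻¹:Rˣ):R) * (e * e) := by rw [hgi]
      _ = ((u⁻¹:Rˣ):R) * e := by rw [he]
  have hef : e * f = e := by
    rw [hfdef, ← mul_assoc, hgi, he]
  have hfe : f * e = f := by
    rw [hfdef, mul_assoc, he]
  have hcomm := comm e f he hff
  have hefe : e = f := by rw [← hef, hcomm, hfe]
  calc (u:R) * e = (u:R) * (((u⁻¹:Rˣ):R) * e) := by rw [← hfdef, ← hefe]
    _ = ((u:R) * ((u⁻¹:Rˣ):R)) * e := by rw [mul_assoc]
    _ = e := by rw [Units.mul_inv, one_mul]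

end Monoid

end CoxProof


section MainAux

open CoxProof

variable {B R : Type*} [Monoid R]

lemma GRC_conj_comm (G : GRCSystem B R) (u u' : Rˣ) (x : R)
    (h : (u:R) * x * ((u⁻¹:Rˣ):R) = (u':R) * x * ((u'⁻¹:Rˣ):R)) :
    x * ((u⁻¹ * u' : Rˣ):R) = ((u⁻¹ * u' : Rˣ):R) * x := by
  have h2 := congrArg (fun z => ((u⁻¹:Rˣ):R) * z * ((u':Rˣ):R)) h
  have hL : ((u⁻¹:Rˣ):R) * ((u:R) * x * ((u⁻¹:Rˣ):R)) * ((u':Rˣ):R)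
      = x * (((u⁻¹:Rˣ):R) * ((u':Rˣ):R)) := by
    calc ((u⁻¹:Rˣ):R) * ((u:R) * x * ((u⁻¹:Rˣ):R)) * ((u':Rˣ):R)
        = ((u⁻¹:Rˣ):R) * ((u:R) * (x * (((u⁻¹:Rˣ):R) * ((u':Rˣ):R)))) := by
          simp only [mul_assoc]
      _ = x * (((u⁻¹:Rˣ):R) * ((u':Rˣ):R)) := Units.inv_mul_cancel_left u _
  have hR : ((u⁻¹:Rˣ):R) * (((u':Rˣ):R) * x * ((u'⁻¹:Rˣ):R)) * ((u':Rˣ):R)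
      = (((u⁻¹:Rˣ):R) * ((u':Rˣ):R)) * x := by
    calc ((u⁻¹:Rˣ):R) * (((u':Rˣ):R) * x * ((u'⁻¹:Rˣ):R)) * ((u':Rˣ):R)
        = ((u⁻¹:Rˣ):R) * (((u':Rˣ):R) * (x * (((u'⁻¹:Rˣ):R) * ((u':Rˣ):R)))) := by
          simp only [mul_assoc]
      _ = ((u⁻¹:Rˣ):R) * (((u':Rˣ):R) * (x * 1)) := by rw [Units.inv_mul]
      _ = (((u⁻¹:Rˣ):R) * ((u':Rˣ):R)) * x := by rw [mul_one, mul_assoc]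
  rw [hL, hR] at h2
  rw [Units.val_mul]
  exact h2

lemma GRC_unique (G : GRCSystem B R) (r : R)
    {w₁ w₂ w₁' w₂' : Rˣ} {e e' : R}
    (h : G.IsNormalDecomp r w₁ e w₂) (h' : G.IsNormalDecomp r w₁' e' w₂') :
    w₁ = w₁' ∧ e = e' ∧ w₂ = w₂' := by
  obtain ⟨heΛ, hmin1, hmin2, hreq⟩ := h
  obtain ⟨heΛ', hmin1', hmin2', hreq'⟩ := h'
  have he : IsIdempotentElem e := G.lam_idem e heΛ
  have he' : IsIdempotentElem e' := G.lam_idem e' heΛ'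
  have hE : (w₁:R) * e * ((w₁⁻¹:Rˣ):R) * ((w₁ * w₂ : Rˣ):R)
      = (w₁':R) * e' * ((w₁'⁻¹:Rˣ):R) * ((w₁' * w₂' : Rˣ):R) := by
    have hl : ∀ (u v : Rˣ) (x : R), (u:R) * x * ((u⁻¹:Rˣ):R) * ((u * v : Rˣ):R)
        = (u:R) * x * (v:R) := by
      intro u v x
      rw [Units.val_mul]
      calc (u:R) * x * ((u⁻¹:Rˣ):R) * ((u:R) * (v:R))
          = (u:R) * x * (((u⁻¹:Rˣ):R) * ((u:R) * (v:R))) := by simp only [mul_assoc]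
        _ = (u:R) * x * (v:R) := by rw [Units.inv_mul_cancel_left]
    rw [hl, hl, ← hreq, ← hreq']
  have hEe : IsIdempotentElem ((w₁:R) * e * ((w₁⁻¹:Rˣ):R)) := idem_conj he w₁
  have hEe' : IsIdempotentElem ((w₁':R) * e' * ((w₁'⁻¹:Rˣ):R)) := idem_conj he' w₁'
  have hEE : (w₁:R) * e * ((w₁⁻¹:Rˣ):R) = (w₁':R) * e' * ((w₁'⁻¹:Rˣ):R) :=
    idem_eq_of_mul_unit G.idem_mul_comm hEe hEe' hE
  obtain ⟨fE, hfE, huniqE⟩ := G.transversal _ hEe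
  have he1 : e = fE := huniqE e ⟨heΛ, w₁, rfl⟩
  have he2 : e' = fE := huniqE e' ⟨heΛ', w₁', hEE.symm⟩
  obtain rfl : e = e' := he1.trans he2.symm
  set a : Rˣ := w₁⁻¹ * w₁' with hadef
  have hconj : e * (a:R) = (a:R) * e := GRC_conj_comm G w₁ w₁' e hEE
  have haW : a ∈ Subgroup.closure (G.cs.simple '' G.lam e) :=
    (G.mem_lam_iff e heΛ a).mp hconj.symm
  have hw₁a : w₁' = w₁ * a := by rw [hadef, mul_inv_cancel_left]
  have hstep : e * (w₂:R) = e * ((a:R) * (w₂':R)) := by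
    have lhs : (w₁:R) * (e * (w₂:R)) = r := by
      rw [← mul_assoc]; exact hreq.symm
    have rhs : (w₁:R) * (e * ((a:R) * (w₂':R))) = r := by
      rw [hreq', hw₁a, Units.val_mul]
      calc (w₁:R) * (e * ((a:R) * (w₂':R)))
          = (w₁:R) * ((e * (a:R)) * (w₂':R)) := by simp only [mul_assoc]
        _ = (w₁:R) * (((a:R) * e) * (w₂':R)) := by rw [hconj]
        _ = (w₁:R) * (a:R) * e * (w₂':R) := by simp only [mul_assoc]
    have h0 : (w₁:R) * (e * (w₂:R)) = (w₁:R) * (e * ((a:R) * (w₂':R))) := by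
      rw [lhs, rhs]
    have h1 := congrArg (fun z => ((w₁⁻¹:Rˣ):R) * z) h0
    simp only [Units.inv_mul_cancel_left] at h1
    exact h1
  have hcancel : ∀ x y : R, x * (w₂:R) = y * (w₂:R) → x = y := by
    intro x y hxy
    have h1 := congrArg (fun z => z * ((w₂⁻¹:Rˣ):R)) hxy
    rwa [mul_assoc, Units.mul_inv, mul_one, mul_assoc, Units.mul_inv, mul_one] at h1
  set dd : Rˣ := a * w₂' * w₂⁻¹ with hddef
  have hed : e * (dd:R) = e := by
    have h1 : (e * (dd:R)) * (w₂:R) = e * (w₂:R) := by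
      rw [hddef, Units.val_mul, Units.val_mul]
      calc e * ((a:R) * (w₂':R) * ((w₂⁻¹:Rˣ):R)) * (w₂:R)
          = e * ((a:R) * ((w₂':R) * (((w₂⁻¹:Rˣ):R) * (w₂:R)))) := by simp only [mul_assoc]
        _ = e * ((a:R) * ((w₂':R) * 1)) := by rw [Units.inv_mul]
        _ = e * ((a:R) * (w₂':R)) := by rw [mul_one]
        _ = e * (w₂:R) := hstep.symm
    exact hcancel _ _ h1
  have hde : (dd:R) * e = e := unit_right_stab G.idem_mul_comm he hed
  have hddStar : dd ∈ Subgroup.closure (G.cs.simple '' G.lamStar e) :=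
    (G.mem_lamStar_iff e heΛ dd).mp ⟨hde, hed⟩
  have hddLam : dd ∈ Subgroup.closure (G.cs.simple '' G.lam e) :=
    (G.mem_lam_iff e heΛ dd).mp (by rw [hde, hed])
  have hcmem' : dd⁻¹ * a ∈ Subgroup.closure (G.cs.simple '' G.lam e) :=
    mul_mem (inv_mem hddLam) haW
  have hw₂rel : w₂ = (dd⁻¹ * a) * w₂' := by rw [hddef]; group
  have hw₂eq : w₂' = w₂ :=
    CoxProof.min_coset_unique_left G.cs (G.lam e) hcmem' hw₂rel hmin2' hmin2
  rw [hw₂eq] at hstep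
  have hea : e * (a:R) = e := by
    refine hcancel _ _ ?_
    calc e * (a:R) * (w₂:R) = e * ((a:R) * (w₂:R)) := by rw [mul_assoc]
      _ = e * (w₂:R) := hstep.symm
  have hae : (a:R) * e = e := unit_right_stab G.idem_mul_comm he hea
  have haStar : a ∈ Subgroup.closure (G.cs.simple '' G.lamStar e) :=
    (G.mem_lamStar_iff e heΛ a).mp ⟨hae, hea⟩
  have hw₁eq : w₁ = w₁' :=
    CoxProof.min_coset_unique_right G.cs (G.lamStar e) haStar hw₁a hmin1 hmin1'
  exact ⟨hw₁eq, rfl, hw₂eq.symm⟩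

end MainAux

/-- every element of a generalised Renner monoid has a unique normal
decomposition `(w₁, e, w₂)`. -/

theorem normal_decomposition_exists_unique
    {B R : Type*} [Monoid R] (G : GRCSystem B R) (r : R) :
    ∃! p : Rˣ × R × Rˣ, G.IsNormalDecomp r p.1 p.2.1 p.2.2 := by
  classical
  obtain ⟨e₀, g, he₀, hre⟩ := G.factor r
  obtain ⟨f, ⟨hfΛ, w, hw⟩, -⟩ := G.transversal e₀ he₀
  obtain ⟨c, hcmem, hcmin⟩ := CoxProof.exists_min_left G.cs (G.lam f) (w⁻¹ * g)
  obtain ⟨v, hvdef⟩ : ∃ v : Rˣ, v = w⁻¹ * g := ⟨_, rfl⟩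
  rw [← hvdef] at hcmin
  obtain ⟨w₂, hw₂def⟩ : ∃ x : Rˣ, x = c * v := ⟨_, rfl⟩
  rw [← hw₂def] at hcmin
  obtain ⟨d, hdmem, hdmin⟩ := CoxProof.exists_min_right G.cs (G.lamStar f) (w * c⁻¹)
  obtain ⟨w₁, hw₁def⟩ : ∃ x : Rˣ, x = (w * c⁻¹) * d := ⟨_, rfl⟩
  rw [← hw₁def] at hdmin
  have hcomm : ((c⁻¹:Rˣ):R) * f = f * ((c⁻¹:Rˣ):R) :=
    ((G.mem_lam_iff f hfΛ c⁻¹).mpr (inv_mem hcmem))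
  have hdstab : ((d⁻¹:Rˣ):R) * f = f ∧ f * ((d⁻¹:Rˣ):R) = f :=
    (G.mem_lamStar_iff f hfΛ d⁻¹).mpr (inv_mem hdmem)
  have hr3 : r = (w₁:R) * f * (w₂:R) := by
    have hv2 : (v:Rˣ) = c⁻¹ * w₂ := by rw [hw₂def, inv_mul_cancel_left]
    have hw1 : (w * c⁻¹ : Rˣ) = w₁ * d⁻¹ := by rw [hw₁def, mul_inv_cancel_right]
    have hvg : ((v:Rˣ):R) = ((w⁻¹:Rˣ):R) * (g:R) := by rw [hvdef, Units.val_mul]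
    calc r = e₀ * (g:R) := hre
      _ = ((w:R) * f * ((w⁻¹:Rˣ):R)) * (g:R) := by rw [hw]
      _ = (w:R) * (f * (((w⁻¹:Rˣ):R) * (g:R))) := by simp only [mul_assoc]
      _ = (w:R) * (f * ((v:Rˣ):R)) := by rw [hvg]
      _ = (w:R) * (f * (((c⁻¹:Rˣ):R) * (w₂:R))) := by rw [hv2, Units.val_mul]
      _ = (w:R) * ((f * ((c⁻¹:Rˣ):R)) * (w₂:R)) := by simp only [mul_assoc]
      _ = (w:R) * ((((c⁻¹:Rˣ):R) * f) * (w₂:R)) := by rw [hcomm]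
      _ = ((w * c⁻¹ : Rˣ):R) * f * (w₂:R) := by rw [Units.val_mul]; simp only [mul_assoc]
      _ = ((w₁ * d⁻¹ : Rˣ):R) * f * (w₂:R) := by rw [hw1]
      _ = (w₁:R) * ((((d⁻¹:Rˣ):R) * f) * (w₂:R)) := by rw [Units.val_mul]; simp only [mul_assoc]
      _ = (w₁:R) * (f * (w₂:R)) := by rw [hdstab.1]
      _ = (w₁:R) * f * (w₂:R) := by rw [mul_assoc]
  have hdecomp : G.IsNormalDecomp r w₁ f w₂ :=
    ⟨hfΛ, fun u hu => hdmin u hu, fun u hu => hcmin u hu, hr3⟩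
  refine ⟨⟨w₁, f, w₂⟩, hdecomp, ?_⟩
  rintro ⟨q₁, qe, q₂⟩ hq
  obtain ⟨h1, h2, h3⟩ := GRC_unique G r hq hdecomp
  exact Prod.ext h1 (Prod.ext h2 h3)
end
end

section
/- Let (R,Λ,S) be a generalised Renner–Coxeter system. For every e, f ∈ Λ and every (λ(e),λ(f))-reduced element w of the unit group W: e·w·f = max{h ∈ Λ : h ≤ e, h ≤ f, w ∈ W_{λ(h)}} = f·w⁻¹·e. -/
noncomputable section



set_option linter.unusedSectionVars false
section CoxAuxSection
namespace CoxeterSystem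

open List

variable {B : Type*} {W : Type*} [Group W] {M : CoxeterMatrix B} (cs : CoxeterSystem M W)

local notation "σ" => cs.simple
local notation "π" => cs.wordProd
local notation "ℓ" => cs.length

private lemma sandwich_eq_iff (a t b x : W) : a * t * b = x ↔ t = a⁻¹ * x * b⁻¹ := by
  constructor
  · intro h; rw [← h]; group
  · intro h; rw [h]; group

open scoped Classical in
/-- The permutation of `W × ZMod 2` attached to a simple reflection. -/
def eta (i : B) : Equiv.Perm (W × ZMod 2) :=
  Function.Involutive.toPerm
    (fun p => (σ i * p.1 * σ i, p.2 + if p.1 = σ i then 1 else 0))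
    (by
      rintro ⟨t, ε⟩
      have h1 : σ i * (σ i * t * σ i) * σ i = t := by
        calc σ i * (σ i * t * σ i) * σ i = σ i * (σ i * (t * σ i)) * σ i := by group
        _ = (t * σ i) * σ i := by rw [cs.simple_mul_simple_cancel_left]
        _ = t := cs.simple_mul_simple_cancel_right i
      have h2 : (σ i * t * σ i = σ i) ↔ (t = σ i) := by
        rw [sandwich_eq_iff]
        have : (σ i)⁻¹ * σ i * (σ i)⁻¹ = σ i := by
          rw [cs.inv_simple]
          calc σ i * σ i * σ i = σ i * (σ i * σ i) := by group
          _ = σ i := by rw [cs.simple_mul_simple_self, mul_one]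
        rw [this]
      dsimp only
      rw [h1, if_congr h2 rfl rfl]
      rcases eq_or_ne t (σ i) with h | h
      · rw [if_pos h, add_assoc]
        norm_num
        exact CharTwo.add_self_eq_zero 1
      · rw [if_neg h, add_zero, add_zero])

open scoped Classical in
lemma eta_apply (i : B) (t : W) (ε : ZMod 2) :
    cs.eta i (t, ε) = (σ i * t * σ i, ε + if t = σ i then 1 else 0) := rfl

/-- The sequence of reflections used in checking the braid relations. -/
def rr (i j : B) (k : ℕ) : W :=
  ((σ i * σ j)⁻¹) ^ ((k + 1) / 2) * σ j * (σ i * σ j) ^ (k / 2)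

open scoped Classical in
lemma eta_mul_pow_apply (i j : B) (m : ℕ) (t : W) (ε : ZMod 2) :
    ((cs.eta i * cs.eta j) ^ m) (t, ε) =
      ((σ i * σ j) ^ m * t * ((σ i * σ j)⁻¹) ^ m,
        ε + ∑ k ∈ Finset.range (2 * m), if t = cs.rr i j k then 1 else 0) := by
  have hcinv : (σ i * σ j)⁻¹ = σ j * σ i := by
    rw [mul_inv_rev, cs.inv_simple, cs.inv_simple]
  induction m with
  | zero => simp
  | succ m ih =>
    rw [pow_succ', Equiv.Perm.mul_apply, ih, Equiv.Perm.mul_apply, eta_apply, eta_apply]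
    have hfirst : σ i * (σ j * ((σ i * σ j) ^ m * t * ((σ i * σ j)⁻¹) ^ m) * σ j) * σ i
        = (σ i * σ j) ^ (m + 1) * t * ((σ i * σ j)⁻¹) ^ (m + 1) := by
      rw [pow_succ', pow_succ, hcinv]
      group
    have hodd : cs.rr i j (2 * m + 1) = ((σ i * σ j)⁻¹) ^ (m + 1) * σ j * (σ i * σ j) ^ m := by
      rw [rr]
      congr 2 <;> congr 1 <;> omega
    have heven : cs.rr i j (2 * m) = ((σ i * σ j)⁻¹) ^ m * σ j * (σ i * σ j) ^ m := by
      rw [rr]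
      congr 2 <;> congr 1 <;> omega
    have hiff1 : ((σ i * σ j) ^ m * t * ((σ i * σ j)⁻¹) ^ m = σ j) ↔ t = cs.rr i j (2 * m) := by
      rw [sandwich_eq_iff, heven, inv_pow, inv_inv]
    have hiff2 : (σ j * ((σ i * σ j) ^ m * t * ((σ i * σ j)⁻¹) ^ m) * σ j = σ i)
        ↔ t = cs.rr i j (2 * m + 1) := by
      rw [sandwich_eq_iff, sandwich_eq_iff, hodd]
      have e0 : ((σ j)⁻¹ * σ i * (σ j)⁻¹ : W) = σ j * σ i * σ j := by rw [cs.inv_simple]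
      have e1 : (((σ i * σ j)⁻¹) ^ m)⁻¹ = (σ i * σ j) ^ m := by rw [inv_pow, inv_inv]
      rw [e0, e1]
      have e2 : (((σ i * σ j)⁻¹) ^ (m + 1) * σ j * (σ i * σ j) ^ m : W)
          = ((σ i * σ j) ^ m)⁻¹ * (σ j * σ i * σ j) * (σ i * σ j) ^ m := by
        rw [pow_succ, inv_pow, hcinv]
        simp [mul_assoc]
      rw [e2]
    rw [if_congr hiff1 rfl rfl, if_congr hiff2 rfl rfl]
    have h2m : 2 * (m + 1) = 2 * m + 1 + 1 := by ring
    rw [h2m, Finset.sum_range_succ, Finset.sum_range_succ, hfirst]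
    rw [Prod.mk.injEq]
    exact ⟨rfl, by push_cast; ring⟩

lemma simple_conj_pow_simple (i j : B) (n : ℕ) :
    σ j * (σ i * σ j) ^ n * σ j = ((σ i * σ j)⁻¹) ^ n := by
  have h1 : σ j * (σ i * σ j) * (σ j)⁻¹ = (σ i * σ j)⁻¹ := by
    rw [cs.inv_simple, mul_inv_rev, cs.inv_simple, cs.inv_simple]
    calc σ j * (σ i * σ j) * σ j = σ j * (σ i * (σ j * σ j)) := by group
    _ = σ j * σ i := by rw [cs.simple_mul_simple_self, mul_one]
  calc σ j * (σ i * σ j) ^ n * σ j = σ j * (σ i * σ j) ^ n * (σ j)⁻¹ := by rw [cs.inv_simple]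
  _ = (σ j * (σ i * σ j) * (σ j)⁻¹) ^ n := by rw [← conj_pow]
  _ = ((σ i * σ j)⁻¹) ^ n := by rw [h1]

lemma dpow_simple_cpow (i j : B) {a b : ℕ} (hab : a + b = M i j) :
    ((σ i * σ j)⁻¹) ^ a * σ j * (σ i * σ j) ^ b = σ j := by
  have key := cs.simple_conj_pow_simple i j b
  calc ((σ i * σ j)⁻¹) ^ a * σ j * (σ i * σ j) ^ b
      = ((σ i * σ j)⁻¹) ^ a * (σ j * (σ i * σ j) ^ b * σ j) * σ j := by
        simp [mul_assoc, cs.simple_mul_simple_self]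
  _ = ((σ i * σ j)⁻¹) ^ a * ((σ i * σ j)⁻¹) ^ b * σ j := by rw [key]
  _ = ((σ i * σ j)⁻¹) ^ (M i j) * σ j := by rw [← pow_add, hab]
  _ = σ j := by rw [inv_pow, cs.simple_mul_simple_pow i j, inv_one, one_mul]

lemma rr_add_M (i j : B) (k : ℕ) : cs.rr i j (k + M i j) = cs.rr i j k := by
  have h3 : ((k + M i j + 1) / 2 - (k + 1) / 2) + ((k + M i j) / 2 - k / 2) = M i j := by omega
  have key := cs.dpow_simple_cpow i j h3
  have h1 : (k + M i j + 1) / 2 = (k + 1) / 2 + ((k + M i j + 1) / 2 - (k + 1) / 2) := by omega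
  have h2 : (k + M i j) / 2 = ((k + M i j) / 2 - k / 2) + k / 2 := by omega
  rw [rr, rr, h1, h2, pow_add, pow_add]
  calc ((σ i * σ j)⁻¹) ^ ((k+1)/2) * ((σ i * σ j)⁻¹) ^ ((k + M i j + 1) / 2 - (k + 1) / 2) * σ j *
        ((σ i * σ j) ^ ((k + M i j) / 2 - k / 2) * (σ i * σ j) ^ (k/2))
      = ((σ i * σ j)⁻¹) ^ ((k+1)/2) *
        (((σ i * σ j)⁻¹) ^ ((k + M i j + 1) / 2 - (k + 1) / 2) * σ j *
          (σ i * σ j) ^ ((k + M i j) / 2 - k / 2)) *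
        (σ i * σ j) ^ (k/2) := by group
  _ = ((σ i * σ j)⁻¹) ^ ((k+1)/2) * σ j * (σ i * σ j) ^ (k/2) := by rw [key]

open scoped Classical in
lemma eta_liftable : M.IsLiftable (fun i => cs.eta i) := by
  intro i j
  ext ⟨t, ε⟩ : 1
  rw [Equiv.Perm.one_apply, eta_mul_pow_apply]
  rw [cs.simple_mul_simple_pow i j, inv_pow, cs.simple_mul_simple_pow i j, inv_one, one_mul, mul_one]
  have hsum : ∑ k ∈ Finset.range (2 * M i j), (if t = cs.rr i j k then (1 : ZMod 2) else 0) = 0 := by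
    have h2 : 2 * M i j = M i j + M i j := by ring
    rw [h2, Finset.sum_range_add]
    have heq : ∑ k ∈ Finset.range (M i j),
          (if t = cs.rr i j (M i j + k) then (1 : ZMod 2) else 0)
        = ∑ k ∈ Finset.range (M i j), (if t = cs.rr i j k then (1 : ZMod 2) else 0) := by
      refine Finset.sum_congr rfl fun k _ => ?_
      rw [add_comm, cs.rr_add_M]
    rw [heq]
    exact CharTwo.add_self_eq_zero _
  rw [hsum, add_zero]

/-- The homomorphism from `W` to permutations of `W × ZMod 2`. -/
def phi : W →* Equiv.Perm (W × ZMod 2) := cs.lift ⟨fun i => cs.eta i, cs.eta_liftable⟩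

lemma phi_simple (i : B) : cs.phi (σ i) = cs.eta i := cs.lift_apply_simple cs.eta_liftable i

/-- The parity cocycle. -/
def nu (w t : W) : ZMod 2 := ((cs.phi w) (t, 0)).2

lemma nu_one (t : W) : cs.nu 1 t = 0 := by
  unfold nu; rw [map_one]; rfl

open scoped Classical in
lemma phi_apply (w : W) : ∀ (t : W) (ε : ZMod 2),
    cs.phi w (t, ε) = (w * t * w⁻¹, ε + cs.nu w t) := by
  induction w using cs.simple_induction_left with
  | one => intro t ε; rw [map_one, cs.nu_one]; simp
  | mul_simple_left w i ih =>
    intro t ε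
    have key : ∀ δ : ZMod 2, cs.phi (σ i * w) (t, δ) =
        (σ i * w * t * (σ i * w)⁻¹,
          δ + (cs.nu w t + if w * t * w⁻¹ = σ i then 1 else 0)) := by
      intro δ
      rw [map_mul, Equiv.Perm.mul_apply, phi_simple, ih t δ, eta_apply]
      rw [Prod.mk.injEq]
      constructor
      · rw [mul_inv_rev, cs.inv_simple]; group
      · rw [add_assoc]
    have hnu : cs.nu (σ i * w) t = cs.nu w t + if w * t * w⁻¹ = σ i then 1 else 0 := by
      have h0 := key 0
      have hdef : cs.nu (σ i * w) t = (cs.phi (σ i * w) (t, 0)).2 := rfl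
      rw [hdef, h0, zero_add]
    rw [key ε, hnu]

lemma nu_mul (a b t : W) : cs.nu (a * b) t = cs.nu b t + cs.nu a (b * t * b⁻¹) := by
  have h1 : cs.phi (a * b) (t, 0) = (a * b * t * (a * b)⁻¹, 0 + cs.nu (a * b) t) :=
    cs.phi_apply (a * b) t 0
  have h2 : cs.phi (a * b) (t, 0)
      = (a * (b * t * b⁻¹) * a⁻¹, (0 + cs.nu b t) + cs.nu a (b * t * b⁻¹)) := by
    rw [map_mul, Equiv.Perm.mul_apply, cs.phi_apply, cs.phi_apply]
  rw [h1] at h2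
  have := congrArg Prod.snd h2
  simpa [add_assoc] using this

open scoped Classical in
lemma nu_simple (i : B) (t : W) : cs.nu (σ i) t = if t = σ i then 1 else 0 := by
  unfold nu
  rw [phi_simple, eta_apply]
  simp

lemma nu_reflection_self {t : W} (ht : cs.IsReflection t) : cs.nu t t = 1 := by
  classical
  obtain ⟨u, i, rfl⟩ := ht
  have hconj : u⁻¹ * (u * σ i * u⁻¹) * u = σ i := by group
  have hsplit : (u * σ i * u⁻¹ : W) = u * (σ i * u⁻¹) := by group
  rw [hsplit]
  have h1 := cs.nu_mul u (σ i * u⁻¹) (u * (σ i * u⁻¹))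
  have h2 := cs.nu_mul (σ i) u⁻¹ (u * (σ i * u⁻¹))
  have e1 : u⁻¹ * (u * (σ i * u⁻¹)) * u⁻¹⁻¹ = σ i := by group
  have e2 : (σ i * u⁻¹) * (u * (σ i * u⁻¹)) * (σ i * u⁻¹)⁻¹ = σ i := by group
  have h3 := cs.nu_mul u u⁻¹ (u * (σ i * u⁻¹))
  rw [mul_inv_cancel, cs.nu_one] at h3
  rw [e1] at h2
  rw [e2] at h1
  rw [h2, cs.nu_simple, if_pos rfl] at h1
  have e3 : u⁻¹ * (u * (σ i * u⁻¹)) * u⁻¹⁻¹ = σ i := e1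
  rw [e3] at h3
  rw [h1]
  linear_combination -h3

open scoped Classical in
/-- Parity of the number of occurrences of `t` in a list. -/
def parity (t : W) (l : List W) : ZMod 2 :=
  (l.map (fun u => if t = u then (1 : ZMod 2) else 0)).sum

open scoped Classical in
lemma parity_nil (t : W) : parity t ([] : List W) = 0 := rfl

open scoped Classical in
lemma parity_cons (t a : W) (l : List W) :
    parity t (a :: l) = (if t = a then 1 else 0) + parity t l := by
  simp [parity]

lemma parity_reverse (t : W) (l : List W) : parity t l.reverse = parity t l := by
  simp [parity, List.sum_reverse]

lemma mem_of_parity_ne_zero {t : W} {l : List W} (h : parity t l ≠ 0) : t ∈ l := by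
  classical
  induction l with
  | nil => exact absurd (parity_nil t) h
  | cons a l ih =>
    rcases eq_or_ne t a with rfl | hta
    · exact List.mem_cons_self
    · rw [parity_cons, if_neg hta, zero_add] at h
      exact List.mem_cons_of_mem a (ih h)

lemma nu_eq_parity_ris (ω : List B) (t : W) : cs.nu (π ω) t = parity t (cs.rightInvSeq ω) := by
  classical
  induction ω generalizing t with
  | nil => rw [wordProd_nil, cs.nu_one]; rfl
  | cons i ω ih =>
    rw [wordProd_cons, cs.nu_mul (σ i) (π ω) t, ih, cs.nu_simple]
    have hris : cs.rightInvSeq (i :: ω) = ((π ω)⁻¹ * σ i * π ω) :: cs.rightInvSeq ω := rfl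
    rw [hris, parity_cons]
    have hiff : (π ω * t * (π ω)⁻¹ = σ i) ↔ (t = (π ω)⁻¹ * σ i * π ω) := by
      rw [sandwich_eq_iff, inv_inv]
    rw [if_congr hiff rfl rfl, add_comm]

lemma nu_inv_eq_parity_lis (ω : List B) (t : W) : cs.nu (π ω)⁻¹ t = parity t (cs.leftInvSeq ω) := by
  rw [← cs.wordProd_reverse, cs.nu_eq_parity_ris, cs.rightInvSeq_reverse, parity_reverse]

private lemma zmod2_cases (x : ZMod 2) : x = 0 ∨ x = 1 := by revert x; decide

/-- Strong exchange property, right-handed version, for arbitrary words. -/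
theorem strong_exchange_right (ω : List B) {t : W} (ht : cs.IsReflection t)
    (hl : ℓ (π ω * t) < ℓ (π ω)) : ∃ k, k < ω.length ∧ π ω * t = π (ω.eraseIdx k) := by
  have htt : t * t * t⁻¹ = t := by rw [ht.mul_self, one_mul, ht.inv]
  have hnu1 : cs.nu (π ω) t = 1 := by
    rcases zmod2_cases (cs.nu (π ω) t) with h0 | h1
    · exfalso
      obtain ⟨ω', hred', hw'⟩ := cs.exists_reduced_word' (π ω * t)
      have hnu2 : cs.nu (π ω * t) t = 1 := by
        rw [cs.nu_mul (π ω) t t, htt, cs.nu_reflection_self ht, h0, add_zero]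
      have hpar : parity t (cs.rightInvSeq ω') = 1 := by
        rw [← cs.nu_eq_parity_ris, ← hw', hnu2]
      have hmem : t ∈ cs.rightInvSeq ω' := mem_of_parity_ne_zero (by rw [hpar]; exact one_ne_zero)
      have hinv := cs.isRightInversion_of_mem_rightInvSeq hred' hmem
      rw [← hw'] at hinv
      have h2 := hinv.2
      rw [mul_assoc, ht.mul_self, mul_one] at h2
      omega
    · exact h1
  rw [cs.nu_eq_parity_ris] at hnu1
  have hmem : t ∈ cs.rightInvSeq ω := mem_of_parity_ne_zero (by rw [hnu1]; exact one_ne_zero)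
  obtain ⟨k, hk, hkt⟩ := List.mem_iff_getElem.mp hmem
  have hk' : k < ω.length := by
    have := cs.length_rightInvSeq ω
    omega
  refine ⟨k, hk', ?_⟩
  have hgetd : (cs.rightInvSeq ω).getD k 1 = t := by
    rw [List.getD_eq_getElem _ _ hk, hkt]
  have := cs.wordProd_mul_getD_rightInvSeq ω k
  rw [hgetd] at this
  exact this

/-- Strong exchange property, left-handed version, for arbitrary words. -/
theorem strong_exchange_left (ω : List B) {t : W} (ht : cs.IsReflection t)
    (hl : ℓ (t * π ω) < ℓ (π ω)) : ∃ k, k < ω.length ∧ t * π ω = π (ω.eraseIdx k) := by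
  have htt : t * t * t⁻¹ = t := by rw [ht.mul_self, one_mul, ht.inv]
  have hnu1 : cs.nu (π ω)⁻¹ t = 1 := by
    rcases zmod2_cases (cs.nu (π ω)⁻¹ t) with h0 | h1
    · exfalso
      obtain ⟨ω', hred', hw'⟩ := cs.exists_reduced_word' (t * π ω)
      have hnu2 : cs.nu (t * π ω)⁻¹ t = 1 := by
        rw [mul_inv_rev, ht.inv, cs.nu_mul (π ω)⁻¹ t t, htt, h0, add_zero,
          cs.nu_reflection_self ht]
      have hpar : parity t (cs.leftInvSeq ω') = 1 := by
        rw [← cs.nu_inv_eq_parity_lis, ← hw', hnu2]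
      have hmem : t ∈ cs.leftInvSeq ω' := mem_of_parity_ne_zero (by rw [hpar]; exact one_ne_zero)
      have hinv := cs.isLeftInversion_of_mem_leftInvSeq hred' hmem
      rw [← hw'] at hinv
      have h2 := hinv.2
      rw [← mul_assoc, ht.mul_self, one_mul] at h2
      omega
    · exact h1
  rw [cs.nu_inv_eq_parity_lis] at hnu1
  have hmem : t ∈ cs.leftInvSeq ω := mem_of_parity_ne_zero (by rw [hnu1]; exact one_ne_zero)
  obtain ⟨k, hk, hkt⟩ := List.mem_iff_getElem.mp hmem
  have hk' : k < ω.length := by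
    have := cs.length_leftInvSeq ω
    omega
  refine ⟨k, hk', ?_⟩
  have hgetd : (cs.leftInvSeq ω).getD k 1 = t := by
    rw [List.getD_eq_getElem _ _ hk, hkt]
  have := cs.getD_leftInvSeq_mul_wordProd ω k
  rw [hgetd] at this
  exact this

/-! ### Parabolic subgroups and words -/

lemma wordProd_mem_closure {H : Subgroup W} {ω : List B}
    (hω : ∀ i ∈ ω, cs.simple i ∈ H) : π ω ∈ H := by
  induction ω with
  | nil => rw [wordProd_nil]; exact one_mem _
  | cons i ω ih =>
    rw [wordProd_cons]
    exact mul_mem (hω i (List.mem_cons_self)) (ih fun j hj => hω j (List.mem_cons_of_mem _ hj))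

lemma wordProd_mem_closure' {K : Set B} {ω : List B} (hω : ∀ i ∈ ω, i ∈ K) :
    π ω ∈ Subgroup.closure (cs.simple '' K) :=
  cs.wordProd_mem_closure fun i hi => Subgroup.subset_closure ⟨i, hω i hi, rfl⟩

lemma exists_word_of_mem_closure {K : Set B} {x : W}
    (hx : x ∈ Subgroup.closure (cs.simple '' K)) :
    ∃ ω : List B, (∀ i ∈ ω, i ∈ K) ∧ π ω = x := by
  induction hx using Subgroup.closure_induction with
  | mem x hx =>
    obtain ⟨i, hi, rfl⟩ := hx
    exact ⟨[i], by simpa using hi, by simp⟩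
  | one => exact ⟨[], by simp, by simp⟩
  | mul x y hx hy ihx ihy =>
    obtain ⟨ω₁, h1, rfl⟩ := ihx
    obtain ⟨ω₂, h2, rfl⟩ := ihy
    refine ⟨ω₁ ++ ω₂, ?_, by rw [wordProd_append]⟩
    intro i hi
    rcases List.mem_append.mp hi with h | h
    · exact h1 i h
    · exact h2 i h
  | inv x hx ihx =>
    obtain ⟨ω, h, rfl⟩ := ihx
    exact ⟨ω.reverse, fun i hi => h i (List.mem_reverse.mp hi), by rw [wordProd_reverse]⟩

lemma exists_reduced_word_subset (K : Set B) :
    ∀ (n : ℕ) (δ : List B), δ.length ≤ n → (∀ i ∈ δ, i ∈ K) →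
    ∃ ω : List B, (∀ i ∈ ω, i ∈ K) ∧ cs.IsReduced ω ∧ π ω = π δ := by
  intro n
  induction n with
  | zero =>
    intro δ hlen _
    have : δ = [] := List.eq_nil_of_length_eq_zero (Nat.le_zero.mp hlen)
    subst this
    exact ⟨[], by simp, by rw [IsReduced, wordProd_nil, length_one]; rfl, rfl⟩
  | succ n ih =>
    intro δ hlen hK
    cases δ with
    | nil => exact ⟨[], by simp, by rw [IsReduced, wordProd_nil, length_one]; rfl, rfl⟩
    | cons i δ' =>
      have hδ'n : δ'.length ≤ n := by
        rw [List.length_cons] at hlen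
        omega
      obtain ⟨ω', hω'K, hω'red, hω'prod⟩ := ih δ' hδ'n
        (fun j hj => hK j (List.mem_cons_of_mem _ hj))
      have hiK : i ∈ K := hK i (List.mem_cons_self)
      have hω'len : ω'.length ≤ n := by
        have h1 : ω'.length = ℓ (π ω') := hω'red.symm
        have h2 := cs.length_wordProd_le δ'
        rw [hω'prod] at h1
        omega
      rcases cs.length_simple_mul (π ω') i with hup | hdown
      · refine ⟨i :: ω', ?_, ?_, ?_⟩
        · intro j hj
          rcases List.mem_cons.mp hj with rfl | h
          · exact hiK
          · exact hω'K j h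
        · rw [IsReduced, wordProd_cons, hup, hω'red, List.length_cons]
        · rw [wordProd_cons, wordProd_cons, hω'prod]
      · have hlt : ℓ (σ i * π ω') < ℓ (π ω') := by omega
        obtain ⟨k, hk, hkeq⟩ := cs.strong_exchange_left ω' (cs.isReflection_simple i) hlt
        have hsub : ∀ j ∈ ω'.eraseIdx k, j ∈ K := fun j hj =>
          hω'K j (List.mem_of_mem_eraseIdx hj)
        have hlen2 : (ω'.eraseIdx k).length ≤ n := by
          rw [List.length_eraseIdx]
          split <;> omega
        obtain ⟨ω'', h1, h2, h3⟩ := ih (ω'.eraseIdx k) hlen2 hsub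
        refine ⟨ω'', h1, h2, ?_⟩
        rw [h3, ← hkeq, wordProd_cons, hω'prod]

lemma exists_reduced_word_subset' {K : Set B} {x : W}
    (hx : x ∈ Subgroup.closure (cs.simple '' K)) :
    ∃ ω : List B, (∀ i ∈ ω, i ∈ K) ∧ cs.IsReduced ω ∧ π ω = x := by
  obtain ⟨δ, hδ, rfl⟩ := cs.exists_word_of_mem_closure hx
  exact cs.exists_reduced_word_subset K δ.length δ le_rfl hδ

lemma simple_mem_closure_of_mem_reduced {K : Set B} :
    ∀ ω : List B, cs.IsReduced ω → π ω ∈ Subgroup.closure (cs.simple '' K) →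
    ∀ i ∈ ω, cs.simple i ∈ Subgroup.closure (cs.simple '' K) := by
  intro ω
  induction ω with
  | nil => intro _ _ i hi; exact absurd hi (List.not_mem_nil)
  | cons i ω' ih =>
    intro hred hx j hj
    have hxval : π (i :: ω') = σ i * π ω' := cs.wordProd_cons i ω'
    have hℓx : ℓ (π (i :: ω')) = ω'.length + 1 := by rw [hred, List.length_cons]
    have hback : σ i * π (i :: ω') = π ω' := by
      rw [hxval, cs.simple_mul_simple_cancel_left]
    have hlt : ℓ (σ i * π (i :: ω')) < ℓ (π (i :: ω')) := by
      rw [hback]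
      have := cs.length_wordProd_le ω'
      omega
    obtain ⟨κ, hκK, hκred, hκprod⟩ := cs.exists_reduced_word_subset' hx
    obtain ⟨k, hk, hkeq⟩ := cs.strong_exchange_left κ (cs.isReflection_simple i)
      (by rw [hκprod]; exact hlt)
    rw [hκprod] at hkeq
    have hsi : σ i ∈ Subgroup.closure (cs.simple '' K) := by
      have hei : σ i = π (κ.eraseIdx k) * (π (i :: ω'))⁻¹ := by
        rw [← hkeq]; group
      rw [hei]
      exact mul_mem (cs.wordProd_mem_closure' fun j hj => hκK j (List.mem_of_mem_eraseIdx hj))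
        (inv_mem hx)
    rcases List.mem_cons.mp hj with rfl | hj'
    · exact hsi
    · have hω'red : cs.IsReduced ω' := by
        have hd := cs.length_simple_mul (π (i :: ω')) i
        rw [hback] at hd
        have hlt' : ℓ (π ω') < ℓ (π (i :: ω')) := by
          have := hlt
          rw [hback] at this
          exact this
        rw [IsReduced]
        omega
      exact ih hω'red (by rw [← hback]; exact mul_mem hsi hx) j hj'

/-! ### Double cosets -/

theorem double_coset_additive (I J : Set B) (w : W)
    (hw : ∀ u ∈ Subgroup.closure (cs.simple '' I), ∀ v ∈ Subgroup.closure (cs.simple '' J),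
      ℓ w ≤ ℓ (u * w * v)) :
    ∀ (n : ℕ) (c v : W), c ∈ Subgroup.closure (cs.simple '' I) →
      v ∈ Subgroup.closure (cs.simple '' J) → ℓ c + ℓ v ≤ n →
    ∃ u' ∈ Subgroup.closure (cs.simple '' I), ∃ v' ∈ Subgroup.closure (cs.simple '' J),
      c * w * v = u' * w * v' ∧ ℓ (c * w * v) = ℓ u' + ℓ w + ℓ v' := by
  intro n
  induction n with
  | zero =>
    intro c v hc hv hn
    have hc1 : c = 1 := cs.length_eq_zero_iff.mp (by omega)
    have hv1 : v = 1 := cs.length_eq_zero_iff.mp (by omega)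
    subst hc1; subst hv1
    refine ⟨1, one_mem _, 1, one_mem _, rfl, ?_⟩
    rw [one_mul, mul_one, cs.length_one]; omega
  | succ n ih =>
    intro c v hc hv hn
    by_cases hc0 : ℓ c = 0
    · by_cases hv0 : ℓ v = 0
      · have hc1 : c = 1 := cs.length_eq_zero_iff.mp hc0
        have hv1 : v = 1 := cs.length_eq_zero_iff.mp hv0
        subst hc1; subst hv1
        refine ⟨1, one_mem _, 1, one_mem _, rfl, ?_⟩
        rw [one_mul, mul_one, cs.length_one]; omega
      · -- peel the last letter of `v`
        obtain ⟨κ, hκJ, hκred, hκprod⟩ := cs.exists_reduced_word_subset' hv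
        rcases List.eq_nil_or_concat' κ with hnil | ⟨κ₁, j, rfl⟩
        · exfalso
          apply hv0
          rw [← hκprod, hnil, wordProd_nil, cs.length_one]
        · have hsplit : v = π κ₁ * σ j := by
            rw [← hκprod, wordProd_append, wordProd_singleton]
          have hjJ : j ∈ J := hκJ j (by simp)
          have hκ₁red : cs.IsReduced κ₁ := by
            have := hκred.take κ₁.length
            rwa [List.take_left] at this
          have hκ₁J : ∀ i ∈ κ₁, i ∈ J := fun i hi => hκJ i (List.mem_append_left _ hi)
          have hv₁mem : π κ₁ ∈ Subgroup.closure (cs.simple '' J) := cs.wordProd_mem_closure' hκ₁J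
          have hlv₁ : ℓ (π κ₁) = κ₁.length := hκ₁red
          have hlv : ℓ v = κ₁.length + 1 := by
            rw [← hκprod, hκred, List.length_append, List.length_singleton]
          obtain ⟨u₂, hu₂, v₂, hv₂, heq, hadd⟩ := ih c (π κ₁) hc hv₁mem (by omega)
          rw [heq] at hadd
          have hx : c * w * v = u₂ * w * v₂ * σ j := by
            rw [hsplit, ← mul_assoc, heq]
          rcases cs.length_mul_simple (u₂ * w * v₂) j with hup | hdown
          · refine ⟨u₂, hu₂, v₂ * σ j,
              mul_mem hv₂ (Subgroup.subset_closure ⟨j, hjJ, rfl⟩), ?_, ?_⟩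
            · rw [hx, mul_assoc]
            · have h1 : ℓ (v₂ * σ j) ≤ ℓ v₂ + 1 := by
                have := cs.length_mul_le v₂ (σ j)
                rwa [cs.length_simple] at this
              have h2 : ℓ (c * w * v) ≤ ℓ u₂ + ℓ w + ℓ (v₂ * σ j) := by
                rw [hx, mul_assoc]
                calc ℓ (u₂ * w * (v₂ * σ j)) ≤ ℓ (u₂ * w) + ℓ (v₂ * σ j) := cs.length_mul_le _ _
                _ ≤ ℓ u₂ + ℓ w + ℓ (v₂ * σ j) :=
                    Nat.add_le_add_right (cs.length_mul_le _ _) _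
              have h3 : ℓ (c * w * v) = ℓ (u₂ * w * v₂) + 1 := by rw [hx]; exact hup
              omega
          · -- exchange
            obtain ⟨α, hαI, hαred, hαprod⟩ := cs.exists_reduced_word_subset' hu₂
            obtain ⟨β, hβred, hβprod⟩ := cs.exists_reduced_word' w
            obtain ⟨γ, hγJ, hγred, hγprod⟩ := cs.exists_reduced_word_subset' hv₂
            have hρprod : π (α ++ β ++ γ) = u₂ * w * v₂ := by
              rw [wordProd_append, wordProd_append, hαprod, ← hβprod, hγprod]
            have hlt : ℓ (π (α ++ β ++ γ) * σ j) < ℓ (π (α ++ β ++ γ)) := by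
              rw [hρprod]; omega
            obtain ⟨k, hk, hkeq⟩ := cs.strong_exchange_right (α ++ β ++ γ)
              (cs.isReflection_simple j) hlt
            rw [hρprod] at hkeq
            have hxerase : c * w * v = π ((α ++ β ++ γ).eraseIdx k) := by
              rw [hx, hkeq]
            have hlα : α.length = ℓ u₂ := by rw [← hαprod]; exact hαred.symm
            have hlβ : β.length = ℓ w := by rw [hβprod]; exact hβred.symm
            have hlγ : γ.length = ℓ v₂ := by rw [← hγprod]; exact hγred.symm
            by_cases hkα : k < α.length
            · have herase : (α ++ β ++ γ).eraseIdx k = α.eraseIdx k ++ β ++ γ := by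
                rw [List.eraseIdx_append_of_lt_length (by rw [List.length_append]; omega) γ,
                  List.eraseIdx_append_of_lt_length hkα β]
              have hxval : c * w * v = π (α.eraseIdx k) * w * v₂ := by
                rw [hxerase, herase, wordProd_append, wordProd_append, ← hβprod, hγprod]
              refine ⟨π (α.eraseIdx k), cs.wordProd_mem_closure'
                (fun i hi => hαI i (List.mem_of_mem_eraseIdx hi)), v₂, hv₂, hxval, ?_⟩
              have e1 : ℓ (π (α.eraseIdx k)) ≤ ℓ u₂ - 1 := by
                have h1 := cs.length_wordProd_le (α.eraseIdx k)
                rw [List.length_eraseIdx] at h1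
                simp only [hkα, if_pos] at h1
                omega
              have e2 : ℓ (c * w * v) ≤ ℓ (π (α.eraseIdx k)) + ℓ w + ℓ v₂ := by
                rw [hxval]
                calc ℓ (π (α.eraseIdx k) * w * v₂)
                    ≤ ℓ (π (α.eraseIdx k) * w) + ℓ v₂ := cs.length_mul_le _ _
                _ ≤ ℓ (π (α.eraseIdx k)) + ℓ w + ℓ v₂ :=
                    Nat.add_le_add_right (cs.length_mul_le _ _) _
              have e3 : ℓ (c * w * v) + 1 = ℓ (u₂ * w * v₂) := by rw [hx]; exact hdown
              have e4 : ℓ u₂ ≥ 1 := by omega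
              omega
            · by_cases hkβ : k < α.length + β.length
              · exfalso
                have herase : (α ++ β ++ γ).eraseIdx k
                    = α ++ β.eraseIdx (k - α.length) ++ γ := by
                  rw [List.eraseIdx_append_of_lt_length (by rw [List.length_append]; omega) γ,
                    List.eraseIdx_append_of_length_le (by omega) β]
                have hxval : c * w * v = u₂ * π (β.eraseIdx (k - α.length)) * v₂ := by
                  rw [hxerase, herase, wordProd_append, wordProd_append, hαprod, hγprod]
                have hwhat : π (β.eraseIdx (k - α.length)) = w * (v₂ * σ j * v₂⁻¹) := by
                  have h5 : u₂ * π (β.eraseIdx (k - α.length)) * v₂ = u₂ * w * v₂ * σ j := by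
                    rw [← hxval, hx]
                  have key : u₂ * (w * (v₂ * σ j * v₂⁻¹)) * v₂ = u₂ * w * v₂ * σ j := by group
                  have h5' : u₂ * π (β.eraseIdx (k - α.length)) * v₂
                      = u₂ * (w * (v₂ * σ j * v₂⁻¹)) * v₂ := by rw [h5, key]
                  exact mul_left_cancel (mul_right_cancel h5')
                have hwle := hw 1 (one_mem _) (v₂ * σ j * v₂⁻¹)
                  (mul_mem (mul_mem hv₂ (Subgroup.subset_closure ⟨j, hjJ, rfl⟩)) (inv_mem hv₂))
                rw [one_mul] at hwle
                have h7 : ℓ (w * (v₂ * σ j * v₂⁻¹)) ≤ β.length - 1 := by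
                  rw [← hwhat]
                  have h8 := cs.length_wordProd_le (β.eraseIdx (k - α.length))
                  rw [List.length_eraseIdx] at h8
                  have h9 : k - α.length < β.length := by omega
                  simp only [h9, if_pos] at h8
                  omega
                omega
              · have hkγ : α.length + β.length ≤ k := by omega
                have herase : (α ++ β ++ γ).eraseIdx k
                    = α ++ β ++ γ.eraseIdx (k - (α.length + β.length)) := by
                  rw [List.eraseIdx_append_of_length_le (by rw [List.length_append]; omega) _]
                  rw [List.length_append]
                have hxval : c * w * v = u₂ * w * π (γ.eraseIdx (k - (α.length + β.length))) := by
                  rw [hxerase, herase, wordProd_append, wordProd_append, hαprod, ← hβprod]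
                refine ⟨u₂, hu₂, π (γ.eraseIdx (k - (α.length + β.length))),
                  cs.wordProd_mem_closure' (fun i hi => hγJ i (List.mem_of_mem_eraseIdx hi)),
                  hxval, ?_⟩
                have hkγ' : k < (α ++ β ++ γ).length := hk
                rw [List.length_append, List.length_append] at hkγ'
                have e1 : ℓ (π (γ.eraseIdx (k - (α.length + β.length)))) ≤ ℓ v₂ - 1 := by
                  have h1 := cs.length_wordProd_le (γ.eraseIdx (k - (α.length + β.length)))
                  rw [List.length_eraseIdx] at h1
                  have : k - (α.length + β.length) < γ.length := by omega
                  simp only [this, if_pos] at h1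
                  omega
                have e2 : ℓ (c * w * v) ≤ ℓ u₂ + ℓ w + ℓ (π (γ.eraseIdx (k - (α.length + β.length)))) := by
                  rw [hxval]
                  calc ℓ (u₂ * w * π (γ.eraseIdx (k - (α.length + β.length))))
                      ≤ ℓ (u₂ * w) + ℓ (π (γ.eraseIdx (k - (α.length + β.length)))) :=
                        cs.length_mul_le _ _
                  _ ≤ ℓ u₂ + ℓ w + ℓ (π (γ.eraseIdx (k - (α.length + β.length)))) :=
                      Nat.add_le_add_right (cs.length_mul_le _ _) _
                have e3 : ℓ (c * w * v) + 1 = ℓ (u₂ * w * v₂) := by rw [hx]; exact hdown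
                have e4 : ℓ v₂ ≥ 1 := by omega
                omega
    · -- peel the first letter of `c`
      obtain ⟨κ, hκI, hκred, hκprod⟩ := cs.exists_reduced_word_subset' hc
      cases κ with
      | nil =>
        exfalso
        apply hc0
        rw [← hκprod, wordProd_nil, cs.length_one]
      | cons i κ₁ =>
        have hsplit : c = σ i * π κ₁ := by rw [← hκprod, wordProd_cons]
        have hiI : i ∈ I := hκI i (List.mem_cons_self)
        have hκ₁red : cs.IsReduced κ₁ := by
          have := hκred.drop 1
          simpa using this
        have hκ₁I : ∀ b ∈ κ₁, b ∈ I := fun b hb => hκI b (List.mem_cons_of_mem _ hb)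
        have hc₁mem : π κ₁ ∈ Subgroup.closure (cs.simple '' I) := cs.wordProd_mem_closure' hκ₁I
        have hlc₁ : ℓ (π κ₁) = κ₁.length := hκ₁red
        have hlc : ℓ c = κ₁.length + 1 := by
          rw [← hκprod, hκred, List.length_cons]
        obtain ⟨u₂, hu₂, v₂, hv₂, heq, hadd⟩ := ih (π κ₁) v hc₁mem hv (by omega)
        rw [heq] at hadd
        have hx : c * w * v = σ i * (u₂ * w * v₂) := by
          rw [hsplit, ← heq]; group
        rcases cs.length_simple_mul (u₂ * w * v₂) i with hup | hdown
        · refine ⟨σ i * u₂, mul_mem (Subgroup.subset_closure ⟨i, hiI, rfl⟩) hu₂, v₂, hv₂, ?_, ?_⟩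
          · rw [hx]; group
          · have h1 : ℓ (σ i * u₂) ≤ ℓ u₂ + 1 := by
              have := cs.length_mul_le (σ i) u₂
              rw [cs.length_simple] at this
              omega
            have h2 : ℓ (c * w * v) ≤ ℓ (σ i * u₂) + ℓ w + ℓ v₂ := by
              have hx2 : c * w * v = σ i * u₂ * w * v₂ := by rw [hx]; group
              rw [hx2]
              calc ℓ (σ i * u₂ * w * v₂) ≤ ℓ (σ i * u₂ * w) + ℓ v₂ := cs.length_mul_le _ _
              _ ≤ ℓ (σ i * u₂) + ℓ w + ℓ v₂ := Nat.add_le_add_right (cs.length_mul_le _ _) _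
            have h3 : ℓ (c * w * v) = ℓ (u₂ * w * v₂) + 1 := by rw [hx]; exact hup
            omega
        · obtain ⟨α, hαI, hαred, hαprod⟩ := cs.exists_reduced_word_subset' hu₂
          obtain ⟨β, hβred, hβprod⟩ := cs.exists_reduced_word' w
          obtain ⟨γ, hγJ, hγred, hγprod⟩ := cs.exists_reduced_word_subset' hv₂
          have hρprod : π (α ++ β ++ γ) = u₂ * w * v₂ := by
            rw [wordProd_append, wordProd_append, hαprod, ← hβprod, hγprod]
          have hlt : ℓ (σ i * π (α ++ β ++ γ)) < ℓ (π (α ++ β ++ γ)) := by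
            rw [hρprod]; omega
          obtain ⟨k, hk, hkeq⟩ := cs.strong_exchange_left (α ++ β ++ γ)
            (cs.isReflection_simple i) hlt
          rw [hρprod] at hkeq
          have hxerase : c * w * v = π ((α ++ β ++ γ).eraseIdx k) := by
            rw [hx, ← hkeq]
          have hlα : α.length = ℓ u₂ := by rw [← hαprod]; exact hαred.symm
          have hlβ : β.length = ℓ w := by rw [hβprod]; exact hβred.symm
          have hlγ : γ.length = ℓ v₂ := by rw [← hγprod]; exact hγred.symm
          by_cases hkα : k < α.length
          · have herase : (α ++ β ++ γ).eraseIdx k = α.eraseIdx k ++ β ++ γ := by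
              rw [List.eraseIdx_append_of_lt_length (by rw [List.length_append]; omega) γ,
                List.eraseIdx_append_of_lt_length hkα β]
            have hxval : c * w * v = π (α.eraseIdx k) * w * v₂ := by
              rw [hxerase, herase, wordProd_append, wordProd_append, ← hβprod, hγprod]
            refine ⟨π (α.eraseIdx k), cs.wordProd_mem_closure'
              (fun b hb => hαI b (List.mem_of_mem_eraseIdx hb)), v₂, hv₂, hxval, ?_⟩
            have e1 : ℓ (π (α.eraseIdx k)) ≤ ℓ u₂ - 1 := by
              have h1 := cs.length_wordProd_le (α.eraseIdx k)
              rw [List.length_eraseIdx] at h1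
              simp only [hkα, if_pos] at h1
              omega
            have e2 : ℓ (c * w * v) ≤ ℓ (π (α.eraseIdx k)) + ℓ w + ℓ v₂ := by
              rw [hxval]
              calc ℓ (π (α.eraseIdx k) * w * v₂)
                  ≤ ℓ (π (α.eraseIdx k) * w) + ℓ v₂ := cs.length_mul_le _ _
              _ ≤ ℓ (π (α.eraseIdx k)) + ℓ w + ℓ v₂ :=
                  Nat.add_le_add_right (cs.length_mul_le _ _) _
            have e3 : ℓ (c * w * v) + 1 = ℓ (u₂ * w * v₂) := by rw [hx]; exact hdown
            have e4 : ℓ u₂ ≥ 1 := by omega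
            omega
          · by_cases hkβ : k < α.length + β.length
            · exfalso
              have herase : (α ++ β ++ γ).eraseIdx k
                  = α ++ β.eraseIdx (k - α.length) ++ γ := by
                rw [List.eraseIdx_append_of_lt_length (by rw [List.length_append]; omega) γ,
                  List.eraseIdx_append_of_length_le (by omega) β]
              have hxval : c * w * v = u₂ * π (β.eraseIdx (k - α.length)) * v₂ := by
                rw [hxerase, herase, wordProd_append, wordProd_append, hαprod, hγprod]
              have hwhat : π (β.eraseIdx (k - α.length)) = (u₂⁻¹ * σ i * u₂) * w := by
                have h5 : u₂ * π (β.eraseIdx (k - α.length)) * v₂ = σ i * (u₂ * w * v₂) := by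
                  rw [← hxval, hx]
                have key : u₂ * ((u₂⁻¹ * σ i * u₂) * w) * v₂ = σ i * (u₂ * w * v₂) := by group
                have h5' : u₂ * π (β.eraseIdx (k - α.length)) * v₂
                    = u₂ * ((u₂⁻¹ * σ i * u₂) * w) * v₂ := by rw [h5, key]
                exact mul_left_cancel (mul_right_cancel h5')
              have hwle := hw (u₂⁻¹ * σ i * u₂)
                (mul_mem (mul_mem (inv_mem hu₂) (Subgroup.subset_closure ⟨i, hiI, rfl⟩)) hu₂)
                1 (one_mem _)
              rw [mul_one] at hwle
              have h7 : ℓ (u₂⁻¹ * σ i * u₂ * w) ≤ β.length - 1 := by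
                rw [← hwhat]
                have h8 := cs.length_wordProd_le (β.eraseIdx (k - α.length))
                rw [List.length_eraseIdx] at h8
                have h9 : k - α.length < β.length := by omega
                simp only [h9, if_pos] at h8
                omega
              omega
            · have herase : (α ++ β ++ γ).eraseIdx k
                  = α ++ β ++ γ.eraseIdx (k - (α.length + β.length)) := by
                rw [List.eraseIdx_append_of_length_le (by rw [List.length_append]; omega) _]
                rw [List.length_append]
              have hxval : c * w * v = u₂ * w * π (γ.eraseIdx (k - (α.length + β.length))) := by
                rw [hxerase, herase, wordProd_append, wordProd_append, hαprod, ← hβprod]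
              refine ⟨u₂, hu₂, π (γ.eraseIdx (k - (α.length + β.length))),
                cs.wordProd_mem_closure' (fun b hb => hγJ b (List.mem_of_mem_eraseIdx hb)),
                hxval, ?_⟩
              have hkγ' : k < (α ++ β ++ γ).length := hk
              rw [List.length_append, List.length_append] at hkγ'
              have e1 : ℓ (π (γ.eraseIdx (k - (α.length + β.length)))) ≤ ℓ v₂ - 1 := by
                have h1 := cs.length_wordProd_le (γ.eraseIdx (k - (α.length + β.length)))
                rw [List.length_eraseIdx] at h1
                have : k - (α.length + β.length) < γ.length := by omega
                simp only [this, if_pos] at h1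
                omega
              have e2 : ℓ (c * w * v)
                  ≤ ℓ u₂ + ℓ w + ℓ (π (γ.eraseIdx (k - (α.length + β.length)))) := by
                rw [hxval]
                calc ℓ (u₂ * w * π (γ.eraseIdx (k - (α.length + β.length))))
                    ≤ ℓ (u₂ * w) + ℓ (π (γ.eraseIdx (k - (α.length + β.length)))) :=
                      cs.length_mul_le _ _
                _ ≤ ℓ u₂ + ℓ w + ℓ (π (γ.eraseIdx (k - (α.length + β.length)))) :=
                    Nat.add_le_add_right (cs.length_mul_le _ _) _
              have e3 : ℓ (c * w * v) + 1 = ℓ (u₂ * w * v₂) := by rw [hx]; exact hdown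
              have e4 : ℓ v₂ ≥ 1 := by omega
              omega

theorem mem_closure_of_double_coset {I J K : Set B} {w c v : W}
    (hw : ∀ u ∈ Subgroup.closure (cs.simple '' I), ∀ v' ∈ Subgroup.closure (cs.simple '' J),
      ℓ w ≤ ℓ (u * w * v'))
    (hc : c ∈ Subgroup.closure (cs.simple '' I)) (hv : v ∈ Subgroup.closure (cs.simple '' J))
    (hx : c * w * v ∈ Subgroup.closure (cs.simple '' K)) :
    w ∈ Subgroup.closure (cs.simple '' K) := by
  obtain ⟨u', hu', v', hv', heq, hadd⟩ :=
    cs.double_coset_additive I J w hw (ℓ c + ℓ v) c v hc hv le_rfl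
  obtain ⟨α, hαI, hαred, hαprod⟩ := cs.exists_reduced_word_subset' hu'
  obtain ⟨β, hβred, hβprod⟩ := cs.exists_reduced_word' w
  obtain ⟨γ, hγJ, hγred, hγprod⟩ := cs.exists_reduced_word_subset' hv'
  have hρprod : π (α ++ β ++ γ) = c * w * v := by
    rw [wordProd_append, wordProd_append, hαprod, ← hβprod, hγprod, ← heq]
  have hρred : cs.IsReduced (α ++ β ++ γ) := by
    rw [IsReduced, hρprod, hadd, List.length_append, List.length_append]
    have e1 : α.length = ℓ u' := by rw [← hαprod]; exact hαred.symm
    have e2 : β.length = ℓ w := by rw [hβprod]; exact hβred.symm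
    have e3 : γ.length = ℓ v' := by rw [← hγprod]; exact hγred.symm
    omega
  have hall := cs.simple_mem_closure_of_mem_reduced (K := K) (α ++ β ++ γ) hρred
    (by rw [hρprod]; exact hx)
  rw [hβprod]
  exact cs.wordProd_mem_closure fun i hi =>
    hall i (List.mem_append_left _ (List.mem_append_right _ hi))

end CoxeterSystem

end CoxAuxSection


namespace GRCSystem

variable {B R : Type*} [Monoid R] {G : GRCSystem B R}

/-- Uniqueness of the `Λ`-representative of a conjugacy class of idempotents. -/
lemma uniq_lambda {x g₁ g₂ : R} (hx : IsIdempotentElem x) (h₁ : g₁ ∈ G.Λ) (h₂ : g₂ ∈ G.Λ)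
    (a b : Rˣ) (ha : (a : R) * g₁ * ((a⁻¹ : Rˣ) : R) = x)
    (hb : (b : R) * g₂ * ((b⁻¹ : Rˣ) : R) = x) : g₁ = g₂ := by
  obtain ⟨f, _, huniq⟩ := G.transversal x hx
  rw [huniq g₁ ⟨h₁, a, ha⟩, huniq g₂ ⟨h₂, b, hb⟩]

lemma conj_idem {x : R} (hx : IsIdempotentElem x) (w : Rˣ) :
    IsIdempotentElem ((w : R) * x * ((w⁻¹ : Rˣ) : R)) := by
  have key : ((w : R) * x * ((w⁻¹ : Rˣ) : R)) * ((w : R) * x * ((w⁻¹ : Rˣ) : R))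
      = (w : R) * (x * (((w⁻¹ : Rˣ) : R) * (w : R) * x)) * ((w⁻¹ : Rˣ) : R) := by
    simp [mul_assoc]
  unfold IsIdempotentElem
  rw [key, Units.inv_mul, one_mul, hx]

lemma idem_mul {x y : R} (hx : IsIdempotentElem x) (hy : IsIdempotentElem y)
    (hcomm : x * y = y * x) : IsIdempotentElem (x * y) := by
  have key : (x * y) * (x * y) = x * (y * x) * y := by simp [mul_assoc]
  unfold IsIdempotentElem
  rw [key, ← hcomm, ← mul_assoc, hx, mul_assoc, hy]

/-- A convenient repackaging of (ECS4) plus transversal uniqueness. -/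
lemma ecs4' {x e : R} (hx : IsIdempotentElem x) (he : e ∈ G.Λ) (hxe : x * e = x)
    (hex : e * x = x) :
    ∃ (u : Rˣ) (h : R), h ∈ G.Λ ∧ h * e = h ∧ e * h = h ∧
      (u : R) * h * ((u⁻¹ : Rˣ) : R) = x ∧ (u : R) * e = e * (u : R) := by
  obtain ⟨u, f₁, f₂, hf₁, hf₂, h12, h21, hconj1, hconj2⟩ :=
    G.ecs4 x e hx (G.lam_idem e he) hxe hex
  have hf₂e : f₂ = e := by
    refine uniq_lambda (G.lam_idem e he) hf₂ he u 1 hconj2 ?_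
    simp
  rw [hf₂e] at h12 h21 hconj2
  have hue : (u : R) * e = e * (u : R) := by
    have h5 := congrArg (fun z => z * (u : R)) hconj2
    simpa [mul_assoc, Units.inv_mul] using h5
  exact ⟨u, f₁, hf₁, h12, h21, hconj1, hue⟩

/-- The key lemma: if a translate `u⁻¹ w v` of the reduced element `w` commutes with
`h ≤ e, f`, then `w` fixes `h` on both sides. -/
lemma fix_of_red {e f : R} (he : e ∈ G.Λ) (hf : f ∈ G.Λ) {w : Rˣ}
    (hw : G.IsRed (G.lam e) (G.lam f) w)
    {h : R} (hh : h ∈ G.Λ) (hhe : h * e = h) {u v : Rˣ} (hu : (u : R) * e = e * (u : R))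
    (hv : (v : R) * f = f * (v : R))
    (hz : ((u⁻¹ * w * v : Rˣ) : R) * h = h * ((u⁻¹ * w * v : Rˣ) : R)) :
    (w : R) * h = h ∧ h * (w : R) = h := by
  classical
  have hzP : (u⁻¹ * w * v) ∈ Subgroup.closure (G.cs.simple '' G.lam h) :=
    (G.mem_lam_iff h hh _).mp hz
  -- the subgroup Q generated by the simples moving `h` nontrivially but commuting with it
  set Q : Subgroup Rˣ := Subgroup.closure (G.cs.simple '' G.lamCostar h) with hQ
  have hQcomm : ∀ y ∈ Q, (y : R) * h = h * (y : R) := by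
    intro y hy
    induction hy using Subgroup.closure_induction with
    | mem x hx => obtain ⟨s, hs, rfl⟩ := hx; exact hs.1
    | one => simp
    | mul a b _ _ iha ihb =>
      rw [Units.val_mul, mul_assoc, ihb, ← mul_assoc, iha, mul_assoc]
    | inv a _ iha =>
      calc ((a⁻¹ : Rˣ) : R) * h = ((a⁻¹ : Rˣ) : R) * (h * (a : R)) * ((a⁻¹ : Rˣ) : R) := by
            rw [mul_assoc ((a⁻¹ : Rˣ) : R) (h * (a : R)), mul_assoc h, Units.mul_inv, mul_one]
      _ = ((a⁻¹ : Rˣ) : R) * ((a : R) * h) * ((a⁻¹ : Rˣ) : R) := by rw [← iha]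
      _ = h * ((a⁻¹ : Rˣ) : R) := by
            rw [← mul_assoc, Units.inv_mul, one_mul]
  have hQe : Q ≤ Subgroup.closure (G.cs.simple '' G.lam e) := by
    rw [hQ, Subgroup.closure_le]
    rintro x ⟨s, hs, rfl⟩
    have hse := G.ecs6 h hh e he hhe s hs
    exact (G.mem_lam_iff e he (G.cs.simple s)).mp hse.1
  -- every element of `W(λ h)` pushes past `h` to an element of `Q`
  have hmain : ∀ z ∈ Subgroup.closure (G.cs.simple '' G.lam h),
      ∃ y ∈ Q, h * (z : R) = (y : R) * h := by
    intro z hzc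
    induction hzc using Subgroup.closure_induction with
    | mem x hx =>
      obtain ⟨s, hs, rfl⟩ := hx
      have hcomm : ((G.cs.simple s : Rˣ) : R) * h = h * ((G.cs.simple s : Rˣ) : R) :=
        (G.mem_lam_iff h hh (G.cs.simple s)).mpr (Subgroup.subset_closure ⟨s, hs, rfl⟩)
      by_cases hfix : ((G.cs.simple s : Rˣ) : R) * h = h
      · exact ⟨1, one_mem _, by rw [← hcomm, hfix, Units.val_one, one_mul]⟩
      · exact ⟨G.cs.simple s, Subgroup.subset_closure ⟨s, ⟨hcomm, hfix⟩, rfl⟩, hcomm.symm⟩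
    | one => exact ⟨1, one_mem _, by simp⟩
    | mul a b _ _ iha ihb =>
      obtain ⟨ya, hya, hya2⟩ := iha
      obtain ⟨yb, hyb, hyb2⟩ := ihb
      refine ⟨ya * yb, mul_mem hya hyb, ?_⟩
      rw [Units.val_mul, Units.val_mul, ← mul_assoc, hya2, mul_assoc, hyb2, ← mul_assoc]
    | inv a _ iha =>
      obtain ⟨y, hy, hy2⟩ := iha
      refine ⟨y⁻¹, inv_mem hy, ?_⟩
      calc h * ((a⁻¹ : Rˣ) : R) = ((y⁻¹ : Rˣ) : R) * ((y : R) * h) * ((a⁻¹ : Rˣ) : R) := by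
            rw [← mul_assoc, Units.inv_mul, one_mul]
      _ = ((y⁻¹ : Rˣ) : R) * (h * (a : R)) * ((a⁻¹ : Rˣ) : R) := by rw [← hy2]
      _ = ((y⁻¹ : Rˣ) : R) * h := by simp [mul_assoc, Units.mul_inv]
  obtain ⟨y, hyQ, hyh⟩ := hmain _ hzP
  -- t := y⁻¹ * (u⁻¹ * w * v) fixes h on both sides
  have ht1 : ((y⁻¹ * (u⁻¹ * w * v) : Rˣ) : R) * h = h := by
    rw [Units.val_mul, mul_assoc]
    rw [show ((u⁻¹ * w * v : Rˣ) : R) * h = (y : R) * h by rw [hz, hyh]]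
    rw [← mul_assoc, Units.inv_mul, one_mul]
  have ht2 : h * ((y⁻¹ * (u⁻¹ * w * v) : Rˣ) : R) = h := by
    rw [Units.val_mul, ← mul_assoc]
    rw [show h * ((y⁻¹ : Rˣ) : R) = ((y⁻¹ : Rˣ) : R) * h from (hQcomm y⁻¹ (inv_mem hyQ)).symm]
    rw [mul_assoc, hyh, ← mul_assoc, Units.inv_mul, one_mul]
  have htP : (y⁻¹ * (u⁻¹ * w * v)) ∈ Subgroup.closure (G.cs.simple '' G.lamStar h) :=
    (G.mem_lamStar_iff h hh _).mp ⟨ht1, ht2⟩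
  -- rewrite t as c * w * v with c in the parabolic of e
  have hueP : u ∈ Subgroup.closure (G.cs.simple '' G.lam e) := (G.mem_lam_iff e he u).mp hu
  have hvfP : v ∈ Subgroup.closure (G.cs.simple '' G.lam f) := (G.mem_lam_iff f hf v).mp hv
  have hteq : (u * y)⁻¹ * w * v = y⁻¹ * (u⁻¹ * w * v) := by group
  have hwmem : w ∈ Subgroup.closure (G.cs.simple '' G.lamStar h) := by
    refine G.cs.mem_closure_of_double_coset (I := G.lam e) (J := G.lam f) (K := G.lamStar h)
      (c := (u * y)⁻¹) (v := v) hw ?_ hvfP ?_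
    · exact inv_mem (mul_mem hueP (hQe hyQ))
    · rw [hteq]; exact htP
  exact (G.mem_lamStar_iff h hh w).mpr hwmem

lemma parab_eq (I : Set B) : G.parab I = Subgroup.closure (G.cs.simple '' I) := rfl

/-- The first half of Statement 11: `e·w·f` lies in `Λ`, is below `e` and `f`, and is fixed
by `w` on both sides. -/
lemma half {e f : R} (he : e ∈ G.Λ) (hf : f ∈ G.Λ) {w : Rˣ}
    (hw : G.IsRed (G.lam e) (G.lam f) w) :
    ∃ h : R, e * (w : R) * f = h ∧ h ∈ G.Λ ∧ h * e = h ∧ e * h = h ∧ h * f = h ∧ f * h = h ∧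
      (w : R) * h = h ∧ h * (w : R) = h := by
  have heid := G.lam_idem e he
  have hfid := G.lam_idem f hf
  have hq : IsIdempotentElem ((w : R) * f * ((w⁻¹ : Rˣ) : R)) := conj_idem hfid w
  have hcomm_eq : e * ((w : R) * f * ((w⁻¹ : Rˣ) : R))
      = ((w : R) * f * ((w⁻¹ : Rˣ) : R)) * e := G.idem_mul_comm _ _ heid hq
  have hh'idem : IsIdempotentElem (e * ((w : R) * f * ((w⁻¹ : Rˣ) : R))) :=
    idem_mul heid hq hcomm_eq
  have hh'e : (e * ((w : R) * f * ((w⁻¹ : Rˣ) : R))) * e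
      = e * ((w : R) * f * ((w⁻¹ : Rˣ) : R)) := by
    calc (e * ((w : R) * f * ((w⁻¹ : Rˣ) : R))) * e
        = e * (((w : R) * f * ((w⁻¹ : Rˣ) : R)) * e) :=
          mul_assoc e ((w : R) * f * ((w⁻¹ : Rˣ) : R)) e
    _ = e * (e * ((w : R) * f * ((w⁻¹ : Rˣ) : R))) := by rw [← hcomm_eq]
    _ = (e * e) * ((w : R) * f * ((w⁻¹ : Rˣ) : R)) :=
          (mul_assoc e e ((w : R) * f * ((w⁻¹ : Rˣ) : R))).symm
    _ = e * ((w : R) * f * ((w⁻¹ : Rˣ) : R)) := by rw [heid]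
  have heh' : e * (e * ((w : R) * f * ((w⁻¹ : Rˣ) : R)))
      = e * ((w : R) * f * ((w⁻¹ : Rˣ) : R)) := by
    rw [← mul_assoc e e ((w : R) * f * ((w⁻¹ : Rˣ) : R)), heid]
  obtain ⟨u, h, hhΛ, hhe, heh, hconj, hue⟩ := ecs4' (G := G) hh'idem he hh'e heh'
  have hid_h := G.lam_idem h hhΛ
  have hpidem : IsIdempotentElem (((w⁻¹ : Rˣ) : R) * e * (w : R)) := by
    have h0 := conj_idem heid w⁻¹
    rwa [inv_inv] at h0
  have hpf : (((w⁻¹ : Rˣ) : R) * e * (w : R)) * f = f * (((w⁻¹ : Rˣ) : R) * e * (w : R)) :=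
    G.idem_mul_comm _ _ hpidem hfid
  have hpfid : IsIdempotentElem ((((w⁻¹ : Rˣ) : R) * e * (w : R)) * f) :=
    idem_mul hpidem hfid hpf
  have hpff : ((((w⁻¹ : Rˣ) : R) * e * (w : R)) * f) * f
      = (((w⁻¹ : Rˣ) : R) * e * (w : R)) * f := by
    rw [mul_assoc, hfid]
  have hfpf : f * ((((w⁻¹ : Rˣ) : R) * e * (w : R)) * f)
      = (((w⁻¹ : Rˣ) : R) * e * (w : R)) * f := by
    calc f * ((((w⁻¹ : Rˣ) : R) * e * (w : R)) * f)
        = (f * (((w⁻¹ : Rˣ) : R) * e * (w : R))) * f :=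
          (mul_assoc f (((w⁻¹ : Rˣ) : R) * e * (w : R)) f).symm
    _ = ((((w⁻¹ : Rˣ) : R) * e * (w : R)) * f) * f := by rw [← hpf]
    _ = (((w⁻¹ : Rˣ) : R) * e * (w : R)) * f := hpff
  obtain ⟨v, g, hgΛ, hgf, hfg, hconjv, hvf⟩ := ecs4' (G := G) hpfid hf hpff hfpf
  have hconjg : ((w * v : Rˣ) : R) * g * (((w * v)⁻¹ : Rˣ) : R)
      = e * ((w : R) * f * ((w⁻¹ : Rˣ) : R)) := by
    have hcoe2 : (((w * v)⁻¹ : Rˣ) : R) = ((v⁻¹ : Rˣ) : R) * ((w⁻¹ : Rˣ) : R) := by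
      rw [mul_inv_rev, Units.val_mul]
    rw [Units.val_mul, hcoe2]
    calc (w : R) * (v : R) * g * (((v⁻¹ : Rˣ) : R) * ((w⁻¹ : Rˣ) : R))
        = (w : R) * ((v : R) * g * ((v⁻¹ : Rˣ) : R)) * ((w⁻¹ : Rˣ) : R) := by
          simp [mul_assoc]
    _ = (w : R) * ((((w⁻¹ : Rˣ) : R) * e * (w : R)) * f) * ((w⁻¹ : Rˣ) : R) := by rw [hconjv]
    _ = e * ((w : R) * f * ((w⁻¹ : Rˣ) : R)) := by
          simp [mul_assoc, Units.mul_inv_cancel_left]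
  have hgh : g = h := uniq_lambda hh'idem hgΛ hhΛ (w * v) u hconjg hconj
  rw [hgh] at hconjv hgf hfg
  have hzconj : ((u⁻¹ * w * v : Rˣ) : R) * h * (((u⁻¹ * w * v)⁻¹ : Rˣ) : R) = h := by
    have c1 : ((u⁻¹ * w * v : Rˣ) : R) = ((u⁻¹ : Rˣ) : R) * (w : R) * (v : R) := by
      rw [Units.val_mul, Units.val_mul]
    have c2 : (((u⁻¹ * w * v)⁻¹ : Rˣ) : R)
        = ((v⁻¹ : Rˣ) : R) * ((w⁻¹ : Rˣ) : R) * (u : R) := by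
      rw [mul_inv_rev, mul_inv_rev, inv_inv, Units.val_mul, Units.val_mul, mul_assoc]
    rw [c1, c2]
    calc ((u⁻¹ : Rˣ) : R) * (w : R) * (v : R) * h
          * (((v⁻¹ : Rˣ) : R) * ((w⁻¹ : Rˣ) : R) * (u : R))
        = ((u⁻¹ : Rˣ) : R) * ((w : R) * ((v : R) * h * ((v⁻¹ : Rˣ) : R)) * ((w⁻¹ : Rˣ) : R))
          * (u : R) := by simp [mul_assoc]
    _ = ((u⁻¹ : Rˣ) : R)
          * ((w : R) * ((((w⁻¹ : Rˣ) : R) * e * (w : R)) * f) * ((w⁻¹ : Rˣ) : R)) * (u : R) := by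
        rw [hconjv]
    _ = ((u⁻¹ : Rˣ) : R) * (e * ((w : R) * f * ((w⁻¹ : Rˣ) : R))) * (u : R) := by
        simp [mul_assoc, Units.mul_inv_cancel_left]
    _ = ((u⁻¹ : Rˣ) : R) * ((u : R) * h * ((u⁻¹ : Rˣ) : R)) * (u : R) := by rw [hconj]
    _ = h := by simp [mul_assoc, Units.inv_mul, Units.inv_mul_cancel_left]
  have hzcomm : ((u⁻¹ * w * v : Rˣ) : R) * h = h * ((u⁻¹ * w * v : Rˣ) : R) := by
    have h5 := congrArg (fun z => z * ((u⁻¹ * w * v : Rˣ) : R)) hzconj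
    rw [mul_assoc, ← Units.val_mul, inv_mul_cancel, Units.val_one, mul_one] at h5
    exact h5
  obtain ⟨hwh, hhw⟩ := fix_of_red he hf hw hhΛ hhe hue hvf hzcomm
  have hwIh : ((w⁻¹ : Rˣ) : R) * h = h := by
    have h5 := congrArg (fun z => ((w⁻¹ : Rˣ) : R) * z) hwh
    rw [← mul_assoc, Units.inv_mul, one_mul] at h5
    exact h5.symm
  have hhwI : h * ((w⁻¹ : Rˣ) : R) = h := by
    have h5 := congrArg (fun z => z * ((w⁻¹ : Rˣ) : R)) hhw
    rw [mul_assoc, Units.mul_inv, mul_one] at h5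
    exact h5.symm
  have hhq : h * ((w : R) * f * ((w⁻¹ : Rˣ) : R)) = h := by
    calc h * ((w : R) * f * ((w⁻¹ : Rˣ) : R)) = ((h * (w : R)) * f) * ((w⁻¹ : Rˣ) : R) := by
          simp [mul_assoc]
    _ = h := by rw [hhw, hgf, hhwI]
  have hqh : ((w : R) * f * ((w⁻¹ : Rˣ) : R)) * h = h := by
    calc ((w : R) * f * ((w⁻¹ : Rˣ) : R)) * h = (w : R) * (f * (((w⁻¹ : Rˣ) : R) * h)) := by
          simp [mul_assoc]
    _ = h := by rw [hwIh, hfg, hwh]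
  have hhh' : h * (e * ((w : R) * f * ((w⁻¹ : Rˣ) : R))) = h := by
    rw [← mul_assoc, hhe, hhq]
  have hh'h : (e * ((w : R) * f * ((w⁻¹ : Rˣ) : R))) * h = h := by
    rw [mul_assoc, hqh, heh]
  obtain ⟨t₂, g₁, g₂, hg₁, hg₂, h12, h21, hc1, hc2⟩ :=
    G.ecs4 h (e * ((w : R) * f * ((w⁻¹ : Rˣ) : R))) hid_h hh'idem hhh' hh'h
  have hg₁h : g₁ = h := uniq_lambda hid_h hg₁ hhΛ t₂ 1 hc1 (by simp)
  have hg₂h : g₂ = h := uniq_lambda hh'idem hg₂ hhΛ t₂ u hc2 hconj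
  have hh'h2 : e * ((w : R) * f * ((w⁻¹ : Rˣ) : R)) = h := by
    have hgg : g₂ = g₁ := by rw [hg₂h, hg₁h]
    rw [← hc2, hgg, hc1]
  have hfinal : e * (w : R) * f = h := by
    have h6 : (e * ((w : R) * f * ((w⁻¹ : Rˣ) : R))) * (w : R) = e * (w : R) * f := by
      simp [mul_assoc, Units.inv_mul]
    rw [← h6, hh'h2, hhw]
  exact ⟨h, hfinal, hhΛ, hhe, heh, hgf, hfg, hwh, hhw⟩

end GRCSystem

/-- for `e, f ∈ Λ` and `w` a `(λ(e), λ(f))`-reduced element of the unit group,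
`e·w·f` is the greatest element of `{h ∈ Λ : h ≤ e, h ≤ f, w ∈ W_{λ(h)}}`, and it equals
`f·w⁻¹·e`. -/
theorem reduced_sandwich_is_max
    {B R : Type*} [Monoid R] (G : GRCSystem B R)
    (e f : R) (he : e ∈ G.Λ) (hf : f ∈ G.Λ) (w : Rˣ)
    (hw : G.IsRed (G.lam e) (G.lam f) w) :
    (e * (w : R) * f ∈ G.Λ ∧
     (e * (w : R) * f) * e = e * (w : R) * f ∧ e * (e * (w : R) * f) = e * (w : R) * f ∧
     (e * (w : R) * f) * f = e * (w : R) * f ∧ f * (e * (w : R) * f) = e * (w : R) * f ∧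
     w ∈ G.parab (G.lam (e * (w : R) * f))) ∧
    (∀ h ∈ G.Λ, h * e = h → e * h = h → h * f = h → f * h = h →
      w ∈ G.parab (G.lam h) →
      h * (e * (w : R) * f) = h ∧ (e * (w : R) * f) * h = h) ∧
    e * (w : R) * f = f * ((w⁻¹ : Rˣ) : R) * e := by
  classical
  obtain ⟨h, hfinal, hhΛ, hhe, heh, hhf, hfh, hwh, hhw⟩ := GRCSystem.half (G := G) he hf hw
  have hhwI : h * ((w⁻¹ : Rˣ) : R) = h := by
    have h5 := congrArg (fun z => z * ((w⁻¹ : Rˣ) : R)) hhw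
    rw [mul_assoc, Units.mul_inv, mul_one] at h5
    exact h5.symm
  refine ⟨?_, ?_, ?_⟩
  · rw [hfinal]
    refine ⟨hhΛ, hhe, heh, hhf, hfh, ?_⟩
    have hcomm : (w : R) * h = h * (w : R) := by rw [hwh, hhw]
    rw [GRCSystem.parab_eq]
    exact (G.mem_lam_iff h hhΛ w).mp hcomm
  · intro h₁ h₁Λ h₁e he₁ h₁f hf₁ hwP
    have hcomm : ((1⁻¹ * w * 1 : Rˣ) : R) * h₁ = h₁ * ((1⁻¹ * w * 1 : Rˣ) : R) := by
      have h5 := (G.mem_lam_iff h₁ h₁Λ w).mpr (by rw [← GRCSystem.parab_eq]; exact hwP)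
      simpa using h5
    obtain ⟨hwh₁, hh₁w⟩ := GRCSystem.fix_of_red (G := G) he hf hw h₁Λ h₁e (u := 1) (v := 1)
      (by simp) (by simp) hcomm
    constructor
    · calc h₁ * (e * (w : R) * f) = ((h₁ * e) * (w : R)) * f := by simp [mul_assoc]
      _ = h₁ := by rw [h₁e, hh₁w, h₁f]
    · calc (e * (w : R) * f) * h₁ = e * ((w : R) * (f * h₁)) := by simp [mul_assoc]
      _ = h₁ := by rw [hf₁, hwh₁, he₁]
  · have hw' : G.IsRed (G.lam f) (G.lam e) w⁻¹ := by
      intro a ha b hb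
      have h1 := hw b⁻¹ (inv_mem hb) a⁻¹ (inv_mem ha)
      calc G.cs.length w⁻¹ = G.cs.length w := G.cs.length_inv w
      _ ≤ G.cs.length (b⁻¹ * w * a⁻¹) := h1
      _ = G.cs.length ((b⁻¹ * w * a⁻¹)⁻¹) := (G.cs.length_inv _).symm
      _ = G.cs.length (a * w⁻¹ * b) := by congr 1; group
    obtain ⟨k, hkfinal, hkΛ, hkf, hfk, hke, hek, hwIk, hkwI⟩ :=
      GRCSystem.half (G := G) hf he hw'
    have hkw : k * (w : R) = k := by
      have h5 := congrArg (fun z => z * (w : R)) hkwI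
      rw [mul_assoc, Units.inv_mul, mul_one] at h5
      exact h5.symm
    have hhk : h * k = h := by
      rw [← hkfinal]
      calc h * (f * ((w⁻¹ : Rˣ) : R) * e) = ((h * f) * ((w⁻¹ : Rˣ) : R)) * e := by
            simp [mul_assoc]
      _ = h := by rw [hhf, hhwI, hhe]
    have hkh : k * h = k := by
      rw [← hfinal]
      calc k * (e * (w : R) * f) = ((k * e) * (w : R)) * f := by simp [mul_assoc]
      _ = k := by rw [hke, hkw, hkf]
    have hcomm : h * k = k * h :=
      G.idem_mul_comm h k (G.lam_idem h hhΛ) (G.lam_idem k hkΛ)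
    rw [hfinal, hkfinal]
    rw [← hhk, hcomm, hkh]
end
end

section
/- Let (R,Λ,S) be a generalised Renner–Coxeter system. For every chain of idempotents e₁ ≤ e₂ ≤ ⋯ ≤ e_m in E(R) there exists w in the unit group G(R) and a chain f₁ ≤ f₂ ≤ ⋯ ≤ f_m in Λ such that w·f_i·w⁻¹ = e_i for every i. -/
noncomputable section

section Helpers

variable {B R : Type*} [Monoid R]

private def uconj (w : Rˣ) (x : R) : R := (w : R) * x * ((w⁻¹ : Rˣ) : R)

private lemma uconj_mul (w : Rˣ) (x y : R) : uconj w x * uconj w y = uconj w (x * y) := by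
  simp [uconj, mul_assoc, Units.inv_mul_cancel_left]

private lemma uconj_one_unit (x : R) : uconj (1 : Rˣ) x = x := by simp [uconj]

private lemma uconj_uconj (w u : Rˣ) (x : R) : uconj w (uconj u x) = uconj (w * u) x := by
  simp [uconj, mul_assoc]

private lemma uconj_inv_uconj (w : Rˣ) (x : R) : uconj w (uconj w⁻¹ x) = x := by
  rw [uconj_uconj, mul_inv_cancel, uconj_one_unit]

private lemma uconj_idem (w : Rˣ) {x : R} (hx : IsIdempotentElem x) :
    IsIdempotentElem (uconj w x) := by
  unfold IsIdempotentElem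
  rw [uconj_mul, hx]

private lemma comm_inv {a : Rˣ} {x : R} (h : (a : R) * x = x * (a : R)) :
    ((a⁻¹ : Rˣ) : R) * x = x * ((a⁻¹ : Rˣ) : R) := by
  calc ((a⁻¹ : Rˣ) : R) * x = (a⁻¹ : Rˣ) * (x * a) * ((a⁻¹ : Rˣ) : R) := by
        simp [mul_assoc, Units.mul_inv_cancel_right]
    _ = ((a⁻¹ : Rˣ) : R) * ((a : R) * x) * ((a⁻¹ : Rˣ) : R) := by rw [h]
    _ = x * ((a⁻¹ : Rˣ) : R) := by simp [← mul_assoc, Units.inv_mul_cancel_left]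

/-- Key lemma: if `e ≤ f` with `f ∈ Λ`, there is a unit `u` and `g ∈ Λ` with `g ≤ f`,
`u g u⁻¹ = e`, and `u` commutes with every element of `Λ` above `f`. -/
private lemma lemA (G : GRCSystem B R) (f : R) (hf : f ∈ G.Λ) (e : R)
    (he : IsIdempotentElem e) (h1 : e * f = e) (h2 : f * e = e) :
    ∃ (u : Rˣ) (g : R), g ∈ G.Λ ∧ g * f = g ∧ f * g = g ∧
      (u : R) * g * ((u⁻¹ : Rˣ) : R) = e ∧
      ∀ h ∈ G.Λ, f * h = f → h * f = f → (u : R) * h = h * (u : R) := by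
  have hfid : IsIdempotentElem f := G.lam_idem f hf
  obtain ⟨w, f₁, f₂, hf₁Λ, hf₂Λ, h12, h21, hc1, hc2⟩ := G.ecs4 e f he hfid h1 h2
  -- uniqueness forces f₂ = f
  obtain ⟨fu, -, huniq⟩ := G.transversal f hfid
  have hA : f₂ = fu := huniq f₂ ⟨hf₂Λ, w, hc2⟩
  have hB : f = fu := huniq f ⟨hf, 1, by simp⟩
  have hf₂ : f₂ = f := hA.trans hB.symm
  rw [hf₂] at h12 h21 hc2
  clear hf₂ hA hB hf₂Λ huniq
  -- so w commutes with f
  have hwf : (w : R) * f = f * (w : R) := by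
    calc (w : R) * f = (w : R) * f * ((w⁻¹ : Rˣ) : R) * (w : R) := by
          simp [mul_assoc, Units.inv_mul_cancel_left, Units.inv_mul]
      _ = f * (w : R) := by rw [hc2]
  have hwmem : w ∈ Subgroup.closure (G.cs.simple '' G.lam f) :=
    (G.mem_lam_iff f hf w).1 hwf
  -- decompose w = a * b with a commuting with everything above f and b fixing f
  set A : Rˣ → Prop := fun a => ((a : R) * f = f * (a : R)) ∧
    ∀ h ∈ G.Λ, f * h = f → h * f = f → (a : R) * h = h * (a : R) with hAdef
  set Bp : Rˣ → Prop := fun b => ((b : R) * f = f) ∧ (f * (b : R) = f) with hBdef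
  have hBinv : ∀ b : Rˣ, Bp b → Bp b⁻¹ := by
    rintro b ⟨hb1, hb2⟩
    constructor
    · calc ((b⁻¹ : Rˣ) : R) * f = ((b⁻¹ : Rˣ) : R) * (f * (b : R)) := by rw [hb2]
        _ = ((b⁻¹ : Rˣ) : R) * f * (b : R) := by rw [mul_assoc]
        _ = f := by
            have : ((b⁻¹ : Rˣ) : R) * f = f * ((b⁻¹ : Rˣ) : R) := by
              have := comm_inv (a := b) (x := f) (by rw [hb1, hb2])
              exact this
            rw [this, mul_assoc, Units.inv_mul, mul_one]
    · calc f * ((b⁻¹ : Rˣ) : R) = ((b : R) * f) * ((b⁻¹ : Rˣ) : R) := by rw [hb1]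
        _ = (b : R) * (f * ((b⁻¹ : Rˣ) : R)) := by rw [mul_assoc]
        _ = f := by
            have hcb : (b : R) * f = f * (b : R) := by rw [hb1, hb2]
            have := comm_inv (a := b) (x := f) hcb
            rw [← this, ← mul_assoc, Units.mul_inv, one_mul]
  have hBconjA : ∀ (a : Rˣ), ((a : R) * f = f * (a : R)) → ∀ b : Rˣ, Bp b →
      Bp (a * b * a⁻¹) := by
    rintro a ha b ⟨hb1, hb2⟩
    have hai : ((a⁻¹ : Rˣ) : R) * f = f * ((a⁻¹ : Rˣ) : R) := comm_inv ha
    constructor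
    · show ((a * b * a⁻¹ : Rˣ) : R) * f = f
      calc ((a * b * a⁻¹ : Rˣ) : R) * f
          = (a : R) * (b : R) * (((a⁻¹ : Rˣ) : R) * f) := by
            simp [Units.val_mul, mul_assoc]
        _ = (a : R) * ((b : R) * f) * ((a⁻¹ : Rˣ) : R) := by rw [hai]; simp [mul_assoc]
        _ = (a : R) * f * ((a⁻¹ : Rˣ) : R) := by rw [hb1]
        _ = f := by rw [ha, mul_assoc, Units.mul_inv, mul_one]
    · show f * ((a * b * a⁻¹ : Rˣ) : R) = f
      calc f * ((a * b * a⁻¹ : Rˣ) : R)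
          = (f * (a : R)) * (b : R) * ((a⁻¹ : Rˣ) : R) := by
            simp [Units.val_mul, mul_assoc]
        _ = (a : R) * (f * (b : R)) * ((a⁻¹ : Rˣ) : R) := by rw [← ha]; simp [mul_assoc]
        _ = (a : R) * f * ((a⁻¹ : Rˣ) : R) := by rw [hb2]
        _ = f := by rw [ha, mul_assoc, Units.mul_inv, mul_one]
  have key : ∀ x ∈ Subgroup.closure (G.cs.simple '' G.lam f),
      ∃ a b : Rˣ, A a ∧ Bp b ∧ x = a * b := by
    intro x hx
    induction hx using Subgroup.closure_induction with
    | mem s hs =>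
      obtain ⟨t, ht, rfl⟩ := hs
      have hsc : ((G.cs.simple t : Rˣ) : R) * f = f * ((G.cs.simple t : Rˣ) : R) :=
        (G.mem_lam_iff f hf _).2 (Subgroup.subset_closure ⟨t, ht, rfl⟩)
      by_cases hsf : ((G.cs.simple t : Rˣ) : R) * f = f
      · refine ⟨1, G.cs.simple t, ⟨by simp, by simp⟩, ⟨hsf, by rw [← hsc, hsf]⟩, by simp⟩
      · refine ⟨G.cs.simple t, 1, ⟨hsc, ?_⟩, ⟨by simp, by simp⟩, by simp⟩
        intro h hh hfh hhf
        exact (G.ecs6 f hf h hh hfh t ⟨hsc, hsf⟩).1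
    | one => exact ⟨1, 1, ⟨by simp, by simp⟩, ⟨by simp, by simp⟩, by simp⟩
    | mul x y hx hy ihx ihy =>
      obtain ⟨a₁, b₁, ha₁, hb₁, rfl⟩ := ihx
      obtain ⟨a₂, b₂, ha₂, hb₂, rfl⟩ := ihy
      refine ⟨a₁ * a₂, (a₂⁻¹ * b₁ * a₂) * b₂, ?_, ?_, by group⟩
      · constructor
        · show ((a₁ * a₂ : Rˣ) : R) * f = f * _
          simp only [Units.val_mul, mul_assoc]
          rw [ha₂.1, ← mul_assoc, ha₁.1, mul_assoc]
        · intro h hh hfh hhf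
          show ((a₁ * a₂ : Rˣ) : R) * h = h * _
          simp only [Units.val_mul, mul_assoc]
          rw [ha₂.2 h hh hfh hhf, ← mul_assoc, ha₁.2 h hh hfh hhf, mul_assoc]
      · have h1 : Bp (a₂⁻¹ * b₁ * a₂) := by
          have := hBconjA a₂⁻¹ (comm_inv ha₂.1) b₁ hb₁
          rwa [inv_inv] at this
        constructor
        · show (((a₂⁻¹ * b₁ * a₂) * b₂ : Rˣ) : R) * f = f
          calc (((a₂⁻¹ * b₁ * a₂) * b₂ : Rˣ) : R) * f
              = ((a₂⁻¹ * b₁ * a₂ : Rˣ) : R) * (((b₂ : Rˣ) : R) * f) := by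
                rw [Units.val_mul, mul_assoc]
            _ = ((a₂⁻¹ * b₁ * a₂ : Rˣ) : R) * f := by rw [hb₂.1]
            _ = f := h1.1
        · show f * (((a₂⁻¹ * b₁ * a₂) * b₂ : Rˣ) : R) = f
          calc f * (((a₂⁻¹ * b₁ * a₂) * b₂ : Rˣ) : R)
              = (f * ((a₂⁻¹ * b₁ * a₂ : Rˣ) : R)) * ((b₂ : Rˣ) : R) := by
                rw [Units.val_mul, ← mul_assoc]
            _ = f * ((b₂ : Rˣ) : R) := by rw [h1.2]
            _ = f := hb₂.2
    | inv x hx ihx =>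
      obtain ⟨a, b, ha, hb, rfl⟩ := ihx
      refine ⟨a⁻¹, a * b⁻¹ * a⁻¹, ?_, hBconjA a ha.1 b⁻¹ (hBinv b hb), by group⟩
      constructor
      · exact comm_inv ha.1
      · intro h hh hfh hhf
        exact comm_inv (ha.2 h hh hfh hhf)
  obtain ⟨a, b, ha, hb, hw⟩ := key w hwmem
  -- b fixes f₁ (which is ≤ f)
  have hbinv := hBinv b hb
  have hbf₁ : (b : R) * f₁ = f₁ := by
    calc (b : R) * f₁ = (b : R) * (f * f₁) := by rw [h21]
      _ = ((b : R) * f) * f₁ := by rw [mul_assoc]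
      _ = f * f₁ := by rw [hb.1]
      _ = f₁ := h21
  have hf₁b : f₁ * ((b⁻¹ : Rˣ) : R) = f₁ := by
    calc f₁ * ((b⁻¹ : Rˣ) : R) = (f₁ * f) * ((b⁻¹ : Rˣ) : R) := by rw [h12]
      _ = f₁ * (f * ((b⁻¹ : Rˣ) : R)) := by rw [mul_assoc]
      _ = f₁ * f := by rw [hbinv.2]
      _ = f₁ := h12
  refine ⟨a, f₁, hf₁Λ, h12, h21, ?_, ha.2⟩
  -- a f₁ a⁻¹ = (a b) f₁ (a b)⁻¹ = w f₁ w⁻¹ = e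
  have : (a : R) * f₁ * ((a⁻¹ : Rˣ) : R) = (w : R) * f₁ * ((w⁻¹ : Rˣ) : R) := by
    rw [hw]
    simp only [mul_inv_rev, Units.val_mul, mul_assoc]
    rw [← mul_assoc (b : R) f₁, hbf₁, ← mul_assoc f₁, hf₁b]
  rw [this, hc1]


private lemma sandwich_mul (w : Rˣ) (x y : R) :
    (((w⁻¹ : Rˣ) : R) * x * (w : R)) * (((w⁻¹ : Rˣ) : R) * y * (w : R)) =
      ((w⁻¹ : Rˣ) : R) * (x * y) * (w : R) := by
  simp [mul_assoc, Units.mul_inv_cancel_left]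

private lemma conj_rev (w : Rˣ) {x y : R} (h : (w : R) * x * ((w⁻¹ : Rˣ) : R) = y) :
    ((w⁻¹ : Rˣ) : R) * y * (w : R) = x := by
  rw [← h]
  simp [mul_assoc, Units.inv_mul_cancel_left, Units.inv_mul]

private lemma conj_rev' (w : Rˣ) (y : R) :
    (w : R) * (((w⁻¹ : Rˣ) : R) * y * (w : R)) * ((w⁻¹ : Rˣ) : R) = y := by
  simp [mul_assoc, Units.mul_inv_cancel_left, Units.mul_inv]

private lemma main_aux (G : GRCSystem B R) :
    ∀ (k : ℕ) (e : Fin (k+1) → R), (∀ i, IsIdempotentElem (e i)) →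
    (∀ i j : Fin (k+1), i ≤ j → e i * e j = e i ∧ e j * e i = e i) →
    ∃ (w : Rˣ) (f : Fin (k+1) → R),
      (∀ i, f i ∈ G.Λ) ∧
      (∀ i j : Fin (k+1), i ≤ j → f i * f j = f i ∧ f j * f i = f i) ∧
      (∀ i, (w : R) * f i * ((w⁻¹ : Rˣ) : R) = e i) := by
  intro k
  induction k with
  | zero =>
    intro e hid _
    obtain ⟨f₀, ⟨hf₀Λ, w, hw⟩, -⟩ := G.transversal (e 0) (hid 0)
    have hfid : IsIdempotentElem f₀ := G.lam_idem f₀ hf₀Λ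
    refine ⟨w, fun _ => f₀, fun _ => hf₀Λ, fun i j _ => ⟨hfid, hfid⟩, fun i => ?_⟩
    have hi : i = 0 := Fin.ext (by omega)
    rw [hi]; exact hw
  | succ k ih =>
    intro e hid hchain
    obtain ⟨w, f', hΛ', hch', hcj'⟩ := ih (fun i => e i.succ) (fun i => hid i.succ)
      (fun i j hij => hchain i.succ j.succ (by simpa using hij))
    set eb : R := ((w⁻¹ : Rˣ) : R) * e 0 * (w : R) with hebdef
    have hf'0 : f' 0 = ((w⁻¹ : Rˣ) : R) * e ((0 : Fin (k+1)).succ) * (w : R) :=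
      (conj_rev w (hcj' 0)).symm
    have hebid : IsIdempotentElem eb := by
      show eb * eb = eb
      rw [hebdef, sandwich_mul, (hid 0)]
    have hle := hchain 0 ((0 : Fin (k+1)).succ) (Fin.zero_le _)
    have heb1 : eb * f' 0 = eb := by
      rw [hebdef, hf'0, sandwich_mul, hle.1]
    have heb2 : f' 0 * eb = eb := by
      rw [hebdef, hf'0, sandwich_mul, hle.2]
    obtain ⟨u, g, hgΛ, hgf, hfg, hucj, hcomm⟩ := lemA G (f' 0) (hΛ' 0) eb hebid heb1 heb2
    have hgid : IsIdempotentElem g := G.lam_idem g hgΛ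
    -- u commutes with every f' i
    have hufix : ∀ i : Fin (k+1), (u : R) * f' i * ((u⁻¹ : Rˣ) : R) = f' i := by
      intro i
      have h0i := hch' 0 i (Fin.zero_le _)
      have := hcomm (f' i) (hΛ' i) h0i.1 h0i.2
      rw [this, mul_assoc, Units.mul_inv, mul_one]
    refine ⟨w * u, Fin.cases g f', ?_, ?_, ?_⟩
    · intro i
      induction i using Fin.cases with
      | zero => simpa using hgΛ
      | succ i => simpa using hΛ' i
    · intro i j hij
      induction i using Fin.cases with
      | zero =>
        induction j using Fin.cases with
        | zero =>
          simp only [Fin.cases_zero]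
          exact ⟨hgid, hgid⟩
        | succ j =>
          have h0j := hch' 0 j (Fin.zero_le _)
          simp only [Fin.cases_zero, Fin.cases_succ]
          constructor
          · calc g * f' j = (g * f' 0) * f' j := by rw [hgf]
              _ = g * (f' 0 * f' j) := by rw [mul_assoc]
              _ = g * f' 0 := by rw [h0j.1]
              _ = g := hgf
          · calc f' j * g = f' j * (f' 0 * g) := by rw [hfg]
              _ = (f' j * f' 0) * g := by rw [mul_assoc]
              _ = f' 0 * g := by rw [h0j.2]
              _ = g := hfg
      | succ i =>
        induction j using Fin.cases with
        | zero => exact absurd (Fin.le_zero_iff.mp hij) (Fin.succ_ne_zero i)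
        | succ j =>
          have hij' : i ≤ j := by simpa using hij
          simpa using hch' i j hij'
    · intro i
      induction i using Fin.cases with
      | zero =>
        simp only [Fin.cases_zero]
        calc ((w * u : Rˣ) : R) * g * (((w * u)⁻¹ : Rˣ) : R)
            = (w : R) * ((u : R) * g * ((u⁻¹ : Rˣ) : R)) * ((w⁻¹ : Rˣ) : R) := by
              simp [mul_assoc]
          _ = (w : R) * eb * ((w⁻¹ : Rˣ) : R) := by rw [hucj]
          _ = e 0 := by rw [hebdef]; exact conj_rev' w (e 0)
      | succ i =>
        simp only [Fin.cases_succ]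
        calc ((w * u : Rˣ) : R) * f' i * (((w * u)⁻¹ : Rˣ) : R)
            = (w : R) * ((u : R) * f' i * ((u⁻¹ : Rˣ) : R)) * ((w⁻¹ : Rˣ) : R) := by
              simp [mul_assoc]
          _ = (w : R) * f' i * ((w⁻¹ : Rˣ) : R) := by rw [hufix i]
          _ = e i.succ := hcj' i

end Helpers

/-- every chain of idempotents `e₁ ≤ ⋯ ≤ e_m` of `R` is simultaneously conjugate,
by a single unit `w`, to a chain `f₁ ≤ ⋯ ≤ f_m` in `Λ`. -/
theorem chain_simultaneously_conjugate
    {B R : Type*} [Monoid R] (G : GRCSystem B R)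
    (m : ℕ) (e : Fin m → R) (hid : ∀ i, IsIdempotentElem (e i))
    (hchain : ∀ i j : Fin m, i ≤ j → e i * e j = e i ∧ e j * e i = e i) :
    ∃ (w : Rˣ) (f : Fin m → R),
      (∀ i, f i ∈ G.Λ) ∧
      (∀ i j : Fin m, i ≤ j → f i * f j = f i ∧ f j * f i = f i) ∧
      (∀ i, (w : R) * f i * ((w⁻¹ : Rˣ) : R) = e i) := by
  match m, e, hid, hchain with
  | 0, _, _, _ => exact ⟨1, Fin.elim0, fun i => i.elim0, fun i _ _ => i.elim0, fun i => i.elim0⟩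
  | (k+1), e, hid, hchain => exact main_aux G k e hid hchain
end
end
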